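/- arXiv:2410.08070 — 9 statements merged into one kernel-verified Lean document; each statement's English description precedes it below -/
import Mathlib

section
/- Let d ≥ 1, p ≥ 1, let U be a continuously differentiable function from ℝ^d to [1,∞), and let G be a continuously differentiable function on ℝ^d∖{0}. Let R > 2, t > 1, r ∈ (0,1), and let (x₀,v₀) ∈ (ℝ^d∖{0}) × ℝ^d (with the additional requirement x₀ > 0 when d = 1) satisfy |x₀| + |x₀|⁻¹ + |v₀| ≤ R. Then there exist functions x̃, ṽ, Γ : [0,t] → ℝ^d with x̃ continuously differentiable, ṽ and Γ continuous, such that: x̃(s) ≠ 0 for all s ∈ [0,t]; x̃′(s) = ṽ(s) for all s ∈ [0,t]; ṽ(s) = v₀ − ∫₀^s [ṽ(ℓ) + ∇U(x̃(ℓ)) + ∇G(x̃(ℓ))] dℓ + Γ(s) for all s ∈ [0,t] with Γ(0) = 0; the boundary conditions x̃(0) = x₀, ṽ(0) = v₀, x̃(t) = e₁, ṽ(t) = 0 hold, where e₁ = (1,0,…,0) is the first standard basis vector of ℝ^d; and ∫₀^t |x̃(s)|^p ds < r. -/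
open MeasureTheory Set

section ControlAux

variable {F : Type*} [NormedAddCommGroup F] [NormedSpace ℝ F]

/-- Scalar profile giving initial velocity: `ctlM δ 0 = 0`, `(ctlM δ)' 0 = 1`,
and `ctlM δ s = 0` for `s ≥ δ`. -/
noncomputable def ctlM (δ s : ℝ) : ℝ :=
  s * Real.smoothTransition (1 - s / δ)

/-- Radial scaling profile: equals `1` near the ends of `[0,t]` and `ε` in the middle. -/
noncomputable def ctlLam (δ ε t s : ℝ) : ℝ :=
  1 - (1 - ε) * (Real.smoothTransition ((s - δ) / δ)
      - Real.smoothTransition ((s - (t - 2 * δ)) / δ))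

/-- Bezier time profile: `0` for `s ≤ 2δ`, `1` for `s ≥ t − 2δ`. -/
noncomputable def ctlSg (δ t s : ℝ) : ℝ :=
  Real.smoothTransition ((s - 2 * δ) / (t - 4 * δ))

/-- Quadratic Bezier curve from `x₀` to `e₁` through `y`. -/
noncomputable def ctlBez (x₀ y e₁ : F) (τ : ℝ) : F :=
  ((1 - τ) ^ 2) • x₀ + (2 * τ * (1 - τ)) • y + (τ ^ 2) • e₁

/-- The controlled path. -/
noncomputable def ctlPath (δ ε t : ℝ) (x₀ y e₁ v₀ : F) (s : ℝ) : F :=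
  ctlM δ s • v₀ + ctlLam δ ε t s • ctlBez x₀ y e₁ (ctlSg δ t s)

lemma ctlM_contDiff (δ : ℝ) : ContDiff ℝ 1 (ctlM δ) :=
  contDiff_id.mul <| (Real.smoothTransition.contDiff (n := 1)).comp <|
    contDiff_const.sub (contDiff_id.div_const δ)

lemma ctlLam_contDiff (δ ε t : ℝ) : ContDiff ℝ 1 (ctlLam δ ε t) :=
  contDiff_const.sub <| contDiff_const.mul <|
    (((Real.smoothTransition.contDiff (n := 1)).comp
        ((contDiff_id.sub contDiff_const).div_const δ)).sub
      ((Real.smoothTransition.contDiff (n := 1)).comp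
        ((contDiff_id.sub contDiff_const).div_const δ)))

lemma ctlSg_contDiff (δ t : ℝ) : ContDiff ℝ 1 (ctlSg δ t) :=
  (Real.smoothTransition.contDiff (n := 1)).comp
    ((contDiff_id.sub contDiff_const).div_const (t - 4 * δ))

lemma ctlBez_contDiff (x₀ y e₁ : F) : ContDiff ℝ 1 (ctlBez x₀ y e₁) := by
  have h1 : ContDiff ℝ 1 (fun τ : ℝ => (1 - τ) ^ 2) :=
    (contDiff_const.sub contDiff_id).pow 2
  have h2 : ContDiff ℝ 1 (fun τ : ℝ => 2 * τ * (1 - τ)) :=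
    (contDiff_const.mul contDiff_id).mul (contDiff_const.sub contDiff_id)
  have h3 : ContDiff ℝ 1 (fun τ : ℝ => τ ^ 2) := contDiff_id.pow 2
  exact ((h1.smul contDiff_const).add (h2.smul contDiff_const)).add
    (h3.smul contDiff_const)

lemma ctlPath_contDiff (δ ε t : ℝ) (x₀ y e₁ v₀ : F) :
    ContDiff ℝ 1 (ctlPath δ ε t x₀ y e₁ v₀) :=
  ((ctlM_contDiff δ).smul contDiff_const).add
    ((ctlLam_contDiff δ ε t).smul ((ctlBez_contDiff x₀ y e₁).comp (ctlSg_contDiff δ t)))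

lemma ctlM_eq_zero {δ s : ℝ} (hδ : 0 < δ) (hs : δ ≤ s) : ctlM δ s = 0 := by
  have : (1 : ℝ) - s / δ ≤ 0 := by
    have : (1 : ℝ) ≤ s / δ := (one_le_div hδ).2 hs
    linarith
  simp [ctlM, Real.smoothTransition.zero_of_nonpos this]

lemma ctlM_nonneg {δ s : ℝ} (hs : 0 ≤ s) : 0 ≤ ctlM δ s :=
  mul_nonneg hs (Real.smoothTransition.nonneg _)

lemma ctlM_le {δ s : ℝ} (hs : 0 ≤ s) : ctlM δ s ≤ s := by
  have h := Real.smoothTransition.le_one (1 - s / δ)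
  calc ctlM δ s ≤ s * 1 := mul_le_mul_of_nonneg_left h hs
  _ = s := mul_one s

lemma ctlM_abs_le {δ s : ℝ} (hδ : 0 < δ) (hs : 0 ≤ s) : |ctlM δ s| ≤ δ := by
  rcases le_or_gt s δ with h | h
  · rw [abs_of_nonneg (ctlM_nonneg hs)]
    exact (ctlM_le hs).trans h
  · rw [ctlM_eq_zero hδ h.le]
    simpa using hδ.le

lemma ctlLam_eq_one_left {δ ε t s : ℝ} (hδ : 0 < δ) (h4 : 4 * δ ≤ t) (hs : s ≤ δ) :
    ctlLam δ ε t s = 1 := by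
  have h1 : (s - δ) / δ ≤ 0 := div_nonpos_of_nonpos_of_nonneg (by linarith) hδ.le
  have h2 : (s - (t - 2 * δ)) / δ ≤ 0 :=
    div_nonpos_of_nonpos_of_nonneg (by linarith) hδ.le
  simp [ctlLam, Real.smoothTransition.zero_of_nonpos h1,
    Real.smoothTransition.zero_of_nonpos h2]

lemma ctlLam_eq_one_right {δ ε t s : ℝ} (hδ : 0 < δ) (h4 : 4 * δ ≤ t) (hs : t - δ ≤ s) :
    ctlLam δ ε t s = 1 := by
  have h1 : (1 : ℝ) ≤ (s - δ) / δ := (one_le_div hδ).2 (by linarith)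
  have h2 : (1 : ℝ) ≤ (s - (t - 2 * δ)) / δ := (one_le_div hδ).2 (by linarith)
  simp [ctlLam, Real.smoothTransition.one_of_one_le h1,
    Real.smoothTransition.one_of_one_le h2]

lemma ctlLam_eq_eps {δ ε t s : ℝ} (hδ : 0 < δ) (hs1 : 2 * δ ≤ s) (hs2 : s ≤ t - 2 * δ) :
    ctlLam δ ε t s = ε := by
  have h1 : (1 : ℝ) ≤ (s - δ) / δ := (one_le_div hδ).2 (by linarith)
  have h2 : (s - (t - 2 * δ)) / δ ≤ 0 :=
    div_nonpos_of_nonpos_of_nonneg (by linarith) hδ.le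
  unfold ctlLam
  rw [Real.smoothTransition.one_of_one_le h1, Real.smoothTransition.zero_of_nonpos h2]
  ring

lemma ctlLam_ge {δ ε t s : ℝ} (hε : ε ≤ 1) : ε ≤ ctlLam δ ε t s := by
  have h1 := Real.smoothTransition.le_one ((s - δ) / δ)
  have h2 := Real.smoothTransition.nonneg ((s - (t - 2 * δ)) / δ)
  unfold ctlLam
  nlinarith

lemma ctlLam_abs_le {δ ε t s : ℝ} (hε0 : 0 ≤ ε) (hε : ε ≤ 1) : |ctlLam δ ε t s| ≤ 2 := by
  have h1 := Real.smoothTransition.le_one ((s - δ) / δ)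
  have h2 := Real.smoothTransition.nonneg ((s - (t - 2 * δ)) / δ)
  have h3 := Real.smoothTransition.nonneg ((s - δ) / δ)
  have h4 := Real.smoothTransition.le_one ((s - (t - 2 * δ)) / δ)
  rw [abs_le]
  unfold ctlLam
  constructor <;> nlinarith

lemma ctlSg_eq_zero {δ t s : ℝ} (h4 : 0 < t - 4 * δ) (hs : s ≤ 2 * δ) :
    ctlSg δ t s = 0 :=
  Real.smoothTransition.zero_of_nonpos
    (div_nonpos_of_nonpos_of_nonneg (by linarith) h4.le)

lemma ctlSg_eq_one {δ t s : ℝ} (h4 : 0 < t - 4 * δ) (hs : t - 2 * δ ≤ s) :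
    ctlSg δ t s = 1 :=
  Real.smoothTransition.one_of_one_le ((one_le_div h4).2 (by linarith))

lemma ctlSg_mem {δ t s : ℝ} : ctlSg δ t s ∈ Icc (0 : ℝ) 1 :=
  ⟨Real.smoothTransition.nonneg _, Real.smoothTransition.le_one _⟩

lemma ctlBez_zero (x₀ y e₁ : F) : ctlBez x₀ y e₁ 0 = x₀ := by
  simp [ctlBez]

lemma ctlBez_one (x₀ y e₁ : F) : ctlBez x₀ y e₁ 1 = e₁ := by
  simp [ctlBez]

lemma ctlBez_norm_le (x₀ y e₁ : F) {τ : ℝ} (hτ : τ ∈ Icc (0 : ℝ) 1) :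
    ‖ctlBez x₀ y e₁ τ‖ ≤ ‖x₀‖ + 2 * ‖y‖ + ‖e₁‖ := by
  obtain ⟨h0, h1⟩ := hτ
  have e1 : ‖((1 - τ) ^ 2) • x₀‖ ≤ ‖x₀‖ := by
    rw [norm_smul, Real.norm_eq_abs]
    have h : |(1 - τ) ^ 2| ≤ 1 := by rw [abs_le]; constructor <;> nlinarith
    calc |(1 - τ) ^ 2| * ‖x₀‖ ≤ 1 * ‖x₀‖ := mul_le_mul_of_nonneg_right h (norm_nonneg _)
      _ = ‖x₀‖ := one_mul _
  have e2 : ‖(2 * τ * (1 - τ)) • y‖ ≤ 2 * ‖y‖ := by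
    rw [norm_smul, Real.norm_eq_abs]
    have h : |2 * τ * (1 - τ)| ≤ 2 := by rw [abs_le]; constructor <;> nlinarith
    exact mul_le_mul_of_nonneg_right h (norm_nonneg _)
  have e3 : ‖(τ ^ 2) • e₁‖ ≤ ‖e₁‖ := by
    rw [norm_smul, Real.norm_eq_abs]
    have h : |τ ^ 2| ≤ 1 := by rw [abs_le]; constructor <;> nlinarith
    calc |τ ^ 2| * ‖e₁‖ ≤ 1 * ‖e₁‖ := mul_le_mul_of_nonneg_right h (norm_nonneg _)
      _ = ‖e₁‖ := one_mul _
  calc ‖ctlBez x₀ y e₁ τ‖ ≤ ‖((1 - τ) ^ 2) • x₀ + (2 * τ * (1 - τ)) • y‖ + ‖(τ ^ 2) • e₁‖ :=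
        norm_add_le _ _
    _ ≤ (‖((1 - τ) ^ 2) • x₀‖ + ‖(2 * τ * (1 - τ)) • y‖) + ‖(τ ^ 2) • e₁‖ := by
        gcongr; exact norm_add_le _ _
    _ ≤ ‖x₀‖ + 2 * ‖y‖ + ‖e₁‖ := by linarith

end ControlAux

set_option maxHeartbeats 2000000 in
/-- Deterministic control lemma (Lemma A.2): the controlled Langevin system
`dx̃ = ṽ dt, dṽ = −ṽ dt − ∇U(x̃) dt − ∇G(x̃) dt + dΓ` can be driven from
`(x₀, v₀)` to `(e₁, 0)` in time `t`, avoiding the origin, with small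
`∫₀^t |x̃|^p`. -/
theorem control_lemma (d : ℕ) (hd : 1 ≤ d) (p : ℝ) (hp : 1 ≤ p)
    (U : EuclideanSpace ℝ (Fin d) → ℝ) (hU : ContDiff ℝ 1 U) (hU1 : ∀ x, 1 ≤ U x)
    (G : EuclideanSpace ℝ (Fin d) → ℝ)
    (hG : ContDiffOn ℝ 1 G {(0 : EuclideanSpace ℝ (Fin d))}ᶜ)
    (R t r : ℝ) (hR : 2 < R) (ht : 1 < t) (hr : r ∈ Set.Ioo (0:ℝ) 1)
    (x₀ v₀ : EuclideanSpace ℝ (Fin d)) (hx₀ : x₀ ≠ 0)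
    (hd1 : d = 1 → ∀ i, 0 < x₀ i)
    (hbound : ‖x₀‖ + ‖x₀‖⁻¹ + ‖v₀‖ ≤ R) :
    ∃ xt vt Γ : ℝ → EuclideanSpace ℝ (Fin d),
      ContDiffOn ℝ 1 xt (Set.Icc 0 t) ∧
      ContinuousOn vt (Set.Icc 0 t) ∧
      ContinuousOn Γ (Set.Icc 0 t) ∧
      (∀ s ∈ Set.Icc (0:ℝ) t, xt s ≠ 0) ∧
      (∀ s ∈ Set.Icc (0:ℝ) t, HasDerivWithinAt xt (vt s) (Set.Icc 0 t) s) ∧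
      (∀ s ∈ Set.Icc (0:ℝ) t,
        vt s = v₀ - (∫ ℓ in (0:ℝ)..s, (vt ℓ + gradient U (xt ℓ) + gradient G (xt ℓ))) + Γ s) ∧
      Γ 0 = 0 ∧
      xt 0 = x₀ ∧ vt 0 = v₀ ∧
      xt t = EuclideanSpace.single (⟨0, hd⟩ : Fin d) (1:ℝ) ∧ vt t = 0 ∧
      (∫ s in (0:ℝ)..t, ‖xt s‖ ^ p) < r := by
  classical
  obtain ⟨hr0, hr1⟩ := hr
  have hR0 : (0:ℝ) < R := by linarith
  have ht0 : (0:ℝ) < t := by linarith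
  have hp0 : (0:ℝ) ≤ p := by linarith
  have hx0pos : (0:ℝ) < ‖x₀‖ := norm_pos_iff.mpr hx₀
  have hxinv : ‖x₀‖⁻¹ ≤ R := by
    have := norm_nonneg x₀; have := norm_nonneg v₀; linarith
  have hxub : ‖x₀‖ ≤ R := by
    have : (0:ℝ) ≤ ‖x₀‖⁻¹ := inv_nonneg.2 hx0pos.le
    have := norm_nonneg v₀; linarith
  have hvub : ‖v₀‖ ≤ R := by
    have : (0:ℝ) ≤ ‖x₀‖⁻¹ := inv_nonneg.2 hx0pos.le
    have := norm_nonneg x₀; linarith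
  have hRx : 1 ≤ R * ‖x₀‖ := by
    have h := mul_le_mul_of_nonneg_right hxinv hx0pos.le
    rwa [inv_mul_cancel₀ hx0pos.ne'] at h
  set e₁ : EuclideanSpace ℝ (Fin d) := EuclideanSpace.single (⟨0, hd⟩ : Fin d) (1:ℝ)
    with he₁
  have he₁norm : ‖e₁‖ = 1 := by
    rw [he₁, EuclideanSpace.norm_single]; norm_num
  have he₁ne : e₁ ≠ 0 := by
    intro h; rw [h] at he₁norm; simp at he₁norm
  -- choice of the Bezier midpoint
  have hy : ∃ y : EuclideanSpace ℝ (Fin d), ‖y‖ ≤ R ∧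
      ∀ τ ∈ Icc (0:ℝ) 1, ctlBez x₀ y e₁ τ ≠ 0 := by
    by_cases hcol : ∃ c : ℝ, c ≤ 0 ∧ x₀ = c • e₁
    · obtain ⟨c, hc0, hxc⟩ := hcol
      have hcneg : c < 0 := by
        rcases lt_or_eq_of_le hc0 with h | h
        · exact h
        · exfalso; apply hx₀; rw [hxc, h, zero_smul]
      have hd2 : 2 ≤ d := by
        by_contra h
        have hd1' : d = 1 := by omega
        have hpos := hd1 hd1' (⟨0, hd⟩ : Fin d)
        have : x₀ (⟨0, hd⟩ : Fin d) = c := by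
          rw [hxc]; simp [he₁, EuclideanSpace.single_apply]
        rw [this] at hpos; linarith
      have h10 : ((⟨1, hd2⟩ : Fin d)) ≠ (⟨0, hd⟩ : Fin d) := by
        intro h; simpa using congrArg Fin.val h
      refine ⟨EuclideanSpace.single (⟨1, hd2⟩ : Fin d) (1:ℝ), ?_, ?_⟩
      · rw [EuclideanSpace.norm_single]; norm_num; linarith
      · intro τ hτ hzero
        obtain ⟨h0, h1⟩ := hτ
        rcases eq_or_lt_of_le h0 with h0' | h0'
        · rw [← h0', ctlBez_zero] at hzero; exact hx₀ hzero
        rcases eq_or_lt_of_le h1 with h1' | h1'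
        · rw [h1', ctlBez_one] at hzero; exact he₁ne hzero
        have h2 := congrArg (fun z : EuclideanSpace ℝ (Fin d) => z (⟨1, hd2⟩ : Fin d)) hzero
        simp only [ctlBez, hxc, PiLp.add_apply, PiLp.smul_apply, PiLp.zero_apply,
          smul_eq_mul, he₁, EuclideanSpace.single_apply, if_neg h10, if_pos rfl] at h2
        norm_num at h2
        rcases h2 with h | h <;> linarith
    · refine ⟨(2:ℝ)⁻¹ • (x₀ + e₁), ?_, ?_⟩
      · rw [norm_smul, Real.norm_eq_abs, abs_of_pos (by norm_num : (0:ℝ) < (2:ℝ)⁻¹)]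
        have : ‖x₀ + e₁‖ ≤ ‖x₀‖ + ‖e₁‖ := norm_add_le _ _
        rw [he₁norm] at this
        nlinarith [norm_nonneg (x₀ + e₁)]
      · intro τ hτ hzero
        obtain ⟨h0, h1⟩ := hτ
        have hlin : (1 - τ) • x₀ + τ • e₁ = 0 := by
          rw [← hzero]; unfold ctlBez; module
        rcases eq_or_lt_of_le h1 with h1' | h1'
        · rw [h1'] at hlin; simp at hlin; exact he₁ne hlin
        have h1τ : 0 < 1 - τ := by linarith
        apply hcol
        refine ⟨-τ / (1 - τ), div_nonpos_of_nonpos_of_nonneg (by linarith) h1τ.le, ?_⟩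
        have : (1 - τ) • x₀ = (-τ) • e₁ := by
          have := hlin
          rw [add_eq_zero_iff_eq_neg] at this
          rw [this, ← neg_smul]
        calc x₀ = (1 - τ)⁻¹ • ((1 - τ) • x₀) := by
              rw [smul_smul, inv_mul_cancel₀ h1τ.ne', one_smul]
          _ = (-τ / (1 - τ)) • e₁ := by
              rw [this, smul_smul]; ring_nf
  obtain ⟨y, hynorm, hyB⟩ := hy
  -- parameters
  set K : ℝ := (9 * R) ^ p with hK
  have hK1 : (1:ℝ) ≤ K := Real.one_le_rpow (by linarith) hp0
  have hK0 : (0:ℝ) < K := by linarith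
  set δ : ℝ := min (1 / (2 * R ^ 2)) (min (r / (16 * K)) ((t - 1) / 8)) with hδdef
  have hδpos : 0 < δ := by
    apply lt_min
    · positivity
    · exact lt_min (by positivity) (by linarith)
  have hδR2 : δ ≤ 1 / (2 * R ^ 2) := min_le_left _ _
  have hδr : δ ≤ r / (16 * K) := (min_le_right _ _).trans (min_le_left _ _)
  have hδt : δ ≤ (t - 1) / 8 := (min_le_right _ _).trans (min_le_right _ _)
  have h4δ : 4 * δ < t := by linarith
  have h4δ' : 0 < t - 4 * δ := by linarith
  set ε : ℝ := r / (16 * R * t) with hεdef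
  have hεpos : 0 < ε := by positivity
  have hε1 : ε ≤ 1 := by
    rw [hεdef, div_le_one (by positivity)]
    nlinarith
  -- the path
  set xt : ℝ → EuclideanSpace ℝ (Fin d) := ctlPath δ ε t x₀ y e₁ v₀ with hxtdef
  set vt : ℝ → EuclideanSpace ℝ (Fin d) := deriv xt with hvtdef
  set Γ : ℝ → EuclideanSpace ℝ (Fin d) := fun s =>
    vt s - v₀ + ∫ ℓ in (0:ℝ)..s, (vt ℓ + gradient U (xt ℓ) + gradient G (xt ℓ)) with hΓdef
  have hsm : ContDiff ℝ 1 xt := ctlPath_contDiff δ ε t x₀ y e₁ v₀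
  have hxtc : Continuous xt := hsm.continuous
  have hvtc : Continuous vt := hsm.continuous_deriv le_rfl
  -- basic value identities
  have hxt_left : ∀ s : ℝ, s ≤ δ → xt s = ctlM δ s • v₀ + x₀ := by
    intro s hs
    rw [hxtdef]
    unfold ctlPath
    rw [ctlLam_eq_one_left hδpos (by linarith) hs,
      ctlSg_eq_zero h4δ' (by linarith), ctlBez_zero, one_smul]
  have hxt_right : ∀ s : ℝ, t - δ ≤ s → xt s = e₁ := by
    intro s hs
    rw [hxtdef]
    unfold ctlPath
    rw [ctlLam_eq_one_right hδpos (by linarith) hs,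
      ctlSg_eq_one h4δ' (by linarith), ctlBez_one, one_smul,
      ctlM_eq_zero hδpos (by linarith), zero_smul, zero_add]
  have hxt0 : xt 0 = x₀ := by
    rw [hxt_left 0 hδpos.le]
    simp [ctlM]
  have hxtt : xt t = e₁ := hxt_right t (by linarith)
  -- derivative values at the endpoints
  have hvt0 : vt 0 = v₀ := by
    have hev : xt =ᶠ[nhds 0] fun s => ctlM δ s • v₀ + x₀ := by
      filter_upwards [Iio_mem_nhds hδpos] with s hs
      exact hxt_left s (le_of_lt hs)
    have hin : HasDerivAt (fun s : ℝ => 1 - s / δ) (0 - 1 / δ) 0 :=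
      (hasDerivAt_const 0 (1:ℝ)).sub ((hasDerivAt_id 0).div_const δ)
    have hφ : HasDerivAt Real.smoothTransition
        (deriv Real.smoothTransition (1 - 0 / δ)) (1 - 0 / δ) :=
      ((Real.smoothTransition.contDiff (n := 1)).differentiable (by norm_num) _).hasDerivAt
    have hg : HasDerivAt (fun s : ℝ => Real.smoothTransition (1 - s / δ))
        (deriv Real.smoothTransition (1 - 0 / δ) * (0 - 1 / δ)) 0 := by
      simpa [Function.comp_def] using HasDerivAt.comp 0 hφ hin
    have hm : HasDerivAt (ctlM δ) 1 0 := by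
      have h := (hasDerivAt_id' (x := (0:ℝ))).mul hg
      have hval : (1 : ℝ) * Real.smoothTransition (1 - 0 / δ)
          + 0 * (deriv Real.smoothTransition (1 - 0 / δ) * (0 - 1 / δ)) = 1 := by
        rw [zero_div, sub_zero, Real.smoothTransition.one]; ring
      rw [hval] at h
      exact h
    have hfull : HasDerivAt (fun s => ctlM δ s • v₀ + x₀) ((1:ℝ) • v₀) 0 :=
      (hm.smul_const v₀).add_const x₀
    rw [hvtdef]
    rw [Filter.EventuallyEq.deriv_eq hev]
    rw [hfull.deriv, one_smul]
  have hvtt : vt t = 0 := by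
    have hev : xt =ᶠ[nhds t] fun _ => e₁ := by
      filter_upwards [Ioi_mem_nhds (show t - δ < t by linarith)] with s hs
      exact hxt_right s (le_of_lt hs)
    rw [hvtdef, Filter.EventuallyEq.deriv_eq hev, deriv_const]
  -- non-vanishing
  have hne : ∀ s ∈ Icc (0:ℝ) t, xt s ≠ 0 := by
    intro s hs
    rcases le_or_gt s δ with h | h
    · rw [hxt_left s h]
      intro hzero
      have hx0eq : x₀ = -(ctlM δ s • v₀) := by
        rw [eq_neg_iff_add_eq_zero, add_comm]; exact hzero
      have h1 : ‖x₀‖ ≤ δ * ‖v₀‖ := by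
        rw [hx0eq, norm_neg, norm_smul, Real.norm_eq_abs]
        exact mul_le_mul_of_nonneg_right (ctlM_abs_le hδpos hs.1) (norm_nonneg _)
      have h2 : δ * ‖v₀‖ ≤ (1 / (2 * R ^ 2)) * R := by
        apply mul_le_mul hδR2 hvub (norm_nonneg _)
        positivity
      have h3 : (1 / (2 * R ^ 2)) * R = 1 / (2 * R) := by
        field_simp
      have h4 : ‖x₀‖ * (2 * R) ≤ 1 := by
        rw [h3] at h2
        have := h1.trans h2
        rw [div_eq_inv_mul, mul_one] at this
        calc ‖x₀‖ * (2 * R) ≤ (2 * R)⁻¹ * (2 * R) := by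
              apply mul_le_mul_of_nonneg_right this; positivity
          _ = 1 := inv_mul_cancel₀ (by positivity)
      linarith
    · have hm0 : ctlM δ s = 0 := ctlM_eq_zero hδpos h.le
      rw [hxtdef]
      unfold ctlPath
      rw [hm0, zero_smul, zero_add]
      exact smul_ne_zero (ne_of_gt (lt_of_lt_of_le hεpos (ctlLam_ge hε1)))
        (hyB _ ctlSg_mem)
  -- global norm bound
  have hnorm_le : ∀ s ∈ Icc (0:ℝ) t, ‖xt s‖ ≤ 9 * R := by
    intro s hs
    rw [hxtdef]
    unfold ctlPath
    have h1 : ‖ctlM δ s • v₀‖ ≤ 1 := by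
      rw [norm_smul, Real.norm_eq_abs]
      have hδ1 : δ * R ≤ 1 := by
        have : δ ≤ 1 / (2 * R ^ 2) := hδR2
        rw [div_eq_inv_mul, mul_one] at this
        have h2R : (1:ℝ) ≤ 2 * R ^ 2 := by nlinarith
        calc δ * R ≤ (2 * R ^ 2)⁻¹ * R := by
              apply mul_le_mul_of_nonneg_right this hR0.le
          _ ≤ 1 := by
              rw [inv_mul_le_iff₀ (by positivity)]
              nlinarith
      calc |ctlM δ s| * ‖v₀‖ ≤ δ * R :=
            mul_le_mul (ctlM_abs_le hδpos hs.1) hvub (norm_nonneg _) hδpos.le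
        _ ≤ 1 := hδ1
    have h2 : ‖ctlLam δ ε t s • ctlBez x₀ y e₁ (ctlSg δ t s)‖ ≤ 2 * (R + 2 * R + 1) := by
      rw [norm_smul, Real.norm_eq_abs]
      have hb := ctlBez_norm_le x₀ y e₁ (ctlSg_mem (δ := δ) (t := t) (s := s))
      rw [he₁norm] at hb
      have hb' : ‖ctlBez x₀ y e₁ (ctlSg δ t s)‖ ≤ R + 2 * R + 1 := by nlinarith
      have hl := ctlLam_abs_le (δ := δ) (t := t) (s := s) hεpos.le hε1
      exact mul_le_mul hl hb' (norm_nonneg _) (by norm_num)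
    have hsum : ‖ctlM δ s • v₀ + ctlLam δ ε t s • ctlBez x₀ y e₁ (ctlSg δ t s)‖
        ≤ ‖ctlM δ s • v₀‖ + ‖ctlLam δ ε t s • ctlBez x₀ y e₁ (ctlSg δ t s)‖ :=
      norm_add_le _ _
    show ‖ctlM δ s • v₀ + ctlLam δ ε t s • ctlBez x₀ y e₁ (ctlSg δ t s)‖ ≤ 9 * R
    linarith
  -- middle norm bound
  have hnorm_mid : ∀ s ∈ Icc (2*δ) (t - 2*δ), ‖xt s‖ ≤ r / (4 * t) := by
    intro s hs
    have hm0 : ctlM δ s = 0 := ctlM_eq_zero hδpos (by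
      have := hs.1; linarith)
    rw [hxtdef]
    unfold ctlPath
    rw [hm0, zero_smul, zero_add, ctlLam_eq_eps hδpos hs.1 hs.2, norm_smul,
      Real.norm_eq_abs, abs_of_pos hεpos]
    have hb := ctlBez_norm_le x₀ y e₁ (ctlSg_mem (δ := δ) (t := t) (s := s))
    rw [he₁norm] at hb
    have hb' : ‖ctlBez x₀ y e₁ (ctlSg δ t s)‖ ≤ 4 * R := by nlinarith
    calc ε * ‖ctlBez x₀ y e₁ (ctlSg δ t s)‖ ≤ ε * (4 * R) := by
          apply mul_le_mul_of_nonneg_left hb' hεpos.le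
      _ = r / (4 * t) := by rw [hεdef]; field_simp; ring
  -- integrability and continuity of the integrand for Γ
  have hgU : Continuous fun z => gradient U z := by
    have h1 : Continuous fun z => fderiv ℝ U z := hU.continuous_fderiv (by norm_num)
    exact (LinearIsometryEquiv.continuous _).comp h1
  have hgG : ContinuousOn (fun z => gradient G z)
      ({(0 : EuclideanSpace ℝ (Fin d))}ᶜ) := by
    have h1 := hG.continuousOn_fderiv_of_isOpen isOpen_compl_singleton le_rfl
    exact (LinearIsometryEquiv.continuous _).comp_continuousOn h1
  have hInt : ContinuousOn
      (fun ℓ => vt ℓ + gradient U (xt ℓ) + gradient G (xt ℓ)) (Icc 0 t) := by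
    apply ContinuousOn.add
    · exact hvtc.continuousOn.add ((hgU.comp hxtc).continuousOn)
    · exact hgG.comp hxtc.continuousOn fun s hs => hne s hs
  have hprim : ContinuousOn (fun s : ℝ =>
      ∫ ℓ in (0:ℝ)..s, (vt ℓ + gradient U (xt ℓ) + gradient G (xt ℓ))) (Icc 0 t) := by
    have hint : IntegrableOn (fun ℓ => vt ℓ + gradient U (xt ℓ) + gradient G (xt ℓ))
        (uIcc (0:ℝ) t) volume := by
      rw [uIcc_of_le ht0.le]
      exact hInt.integrableOn_Icc
    have := intervalIntegral.continuousOn_primitive_interval hint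
    rwa [uIcc_of_le ht0.le] at this
  -- the integral estimate
  have hfcont : Continuous fun s => ‖xt s‖ ^ p :=
    (continuous_norm.comp hxtc).rpow_const (fun s => Or.inr hp0)
  have hIineq : (∫ s in (0:ℝ)..t, ‖xt s‖ ^ p) < r := by
    have hii : ∀ a b : ℝ, IntervalIntegrable (fun s => ‖xt s‖ ^ p) volume a b :=
      fun a b => hfcont.intervalIntegrable a b
    have hsplit : (∫ s in (0:ℝ)..t, ‖xt s‖ ^ p) =
        (∫ s in (0:ℝ)..(2*δ), ‖xt s‖ ^ p) + (∫ s in (2*δ)..(t-2*δ), ‖xt s‖ ^ p)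
          + (∫ s in (t-2*δ)..t, ‖xt s‖ ^ p) := by
      rw [intervalIntegral.integral_add_adjacent_intervals (hii 0 (2*δ)) (hii (2*δ) (t-2*δ)),
        intervalIntegral.integral_add_adjacent_intervals (hii 0 (t-2*δ)) (hii (t-2*δ) t)]
    have hb1 : (∫ s in (0:ℝ)..(2*δ), ‖xt s‖ ^ p) ≤ 2*δ * K := by
      have hmono : ∀ s ∈ Icc (0:ℝ) (2*δ), ‖xt s‖ ^ p ≤ K := by
        intro s hs
        have hs' : s ∈ Icc (0:ℝ) t := ⟨hs.1, by have := hs.2; linarith⟩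
        rw [hK]
        exact Real.rpow_le_rpow (norm_nonneg _) (hnorm_le s hs') hp0
      calc (∫ s in (0:ℝ)..(2*δ), ‖xt s‖ ^ p) ≤ ∫ _ in (0:ℝ)..(2*δ), K :=
            intervalIntegral.integral_mono_on (by linarith) (hii 0 (2*δ))
              (intervalIntegrable_const) hmono
        _ = 2*δ * K := by rw [intervalIntegral.integral_const, smul_eq_mul]; ring
    have hb3 : (∫ s in (t-2*δ)..t, ‖xt s‖ ^ p) ≤ 2*δ * K := by
      have hmono : ∀ s ∈ Icc (t-2*δ) t, ‖xt s‖ ^ p ≤ K := by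
        intro s hs
        have hs' : s ∈ Icc (0:ℝ) t := ⟨by have := hs.1; linarith, hs.2⟩
        rw [hK]
        exact Real.rpow_le_rpow (norm_nonneg _) (hnorm_le s hs') hp0
      calc (∫ s in (t-2*δ)..t, ‖xt s‖ ^ p) ≤ ∫ _ in (t-2*δ)..t, K :=
            intervalIntegral.integral_mono_on (by linarith) (hii (t-2*δ) t)
              (intervalIntegrable_const) hmono
        _ = 2*δ * K := by rw [intervalIntegral.integral_const, smul_eq_mul]; ring
    have hr4t : 0 < r / (4 * t) := by positivity
    have hr4t1 : r / (4 * t) ≤ 1 := by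
      rw [div_le_one (by positivity)]; nlinarith
    have hb2 : (∫ s in (2*δ)..(t-2*δ), ‖xt s‖ ^ p) ≤ (t - 4*δ) * (r / (4 * t)) := by
      have hmono : ∀ s ∈ Icc (2*δ) (t-2*δ), ‖xt s‖ ^ p ≤ r / (4 * t) := by
        intro s hs
        calc ‖xt s‖ ^ p ≤ (r / (4 * t)) ^ p :=
              Real.rpow_le_rpow (norm_nonneg _) (hnorm_mid s hs) hp0
          _ ≤ (r / (4 * t)) ^ (1:ℝ) :=
              Real.rpow_le_rpow_of_exponent_ge hr4t hr4t1 hp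
          _ = r / (4 * t) := Real.rpow_one _
      calc (∫ s in (2*δ)..(t-2*δ), ‖xt s‖ ^ p) ≤ ∫ _ in (2*δ)..(t-2*δ), (r / (4 * t)) :=
            intervalIntegral.integral_mono_on (by linarith) (hii (2*δ) (t-2*δ))
              (intervalIntegrable_const) hmono
        _ = (t - 4*δ) * (r / (4 * t)) := by
            rw [intervalIntegral.integral_const, smul_eq_mul]; ring
    have hmid : (t - 4*δ) * (r / (4 * t)) ≤ r / 4 := by
      have h1 : (t - 4*δ) * (r / (4 * t)) ≤ t * (r / (4 * t)) :=
        mul_le_mul_of_nonneg_right (by linarith) hr4t.le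
      have h2 : t * (r / (4 * t)) = r / 4 := by field_simp
      linarith
    have hends : 4 * δ * K ≤ r / 4 := by
      have h16 : δ * (16 * K) ≤ r := by
        rw [← le_div_iff₀ (by positivity : (0:ℝ) < 16 * K)]
        exact hδr
      nlinarith
    rw [hsplit]
    linarith
  -- assemble
  refine ⟨xt, vt, Γ, ?_, ?_, ?_, hne, ?_, ?_, ?_, hxt0, hvt0, hxtt, hvtt, hIineq⟩
  · exact hsm.contDiffOn
  · exact hvtc.continuousOn
  · rw [hΓdef]
    exact ((hvtc.continuousOn.sub continuousOn_const).add hprim)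
  · intro s hs
    exact ((hsm.differentiable (by norm_num) s).hasDerivAt).hasDerivWithinAt
  · intro s hs
    show vt s = v₀ - (∫ ℓ in (0:ℝ)..s, (vt ℓ + gradient U (xt ℓ) + gradient G (xt ℓ)))
      + (vt s - v₀ + ∫ ℓ in (0:ℝ)..s, (vt ℓ + gradient U (xt ℓ) + gradient G (xt ℓ)))
    set I := ∫ ℓ in (0:ℝ)..s, (vt ℓ + gradient U (xt ℓ) + gradient G (xt ℓ)) with hI
    abel
  · rw [hΓdef]
    simp [hvt0]
end

section
/- Let d ≥ 1, let x₀, v₀, e ∈ ℝ^d, let ε > 0, and define x̃ : [0,ε] → ℝ^d by x̃(s) = (1 − σ(s))·x₀ + σ(s)·e + ε·(s³/ε³ − 2s²/ε² + s/ε)·v₀, where σ(s) = 3s²/ε² − 2s³/ε³. Then x̃(0) = x₀, x̃(ε) = e, x̃′(0) = v₀, and x̃′(ε) = 0. Moreover, if x₀ and e are linearly independent, then c := min_{r∈[0,1]} |(1−r)x₀ + r·e| > 0, and if in addition |v₀| ≤ R for some R > 0 and 4εR < c, then x̃(s) ≠ 0 for every s ∈ [0,ε]. -/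
open Set

/-- The cubic interpolation path from the proof of the control lemma (Lemma A.2):
`x̃(s) = (1−σ(s))x₀ + σ(s)e + ε(s³/ε³ − 2s²/ε² + s/ε)v₀` with
`σ(s) = 3s²/ε² − 2s³/ε³` drives `(x₀,v₀)` to `(e,0)` in time `ε`, and avoids the
origin when `x₀, e` are linearly independent and `4εR < min_{r∈[0,1]} |(1−r)x₀ + re|`. -/
theorem cubic_interpolation_path (d : ℕ) (hd : 1 ≤ d)
    (x₀ v₀ e : EuclideanSpace ℝ (Fin d)) (ε R : ℝ) (hε : 0 < ε)
    (σ : ℝ → ℝ) (hσ : ∀ s, σ s = 3 * s ^ 2 / ε ^ 2 - 2 * s ^ 3 / ε ^ 3)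
    (xt : ℝ → EuclideanSpace ℝ (Fin d))
    (hxt : ∀ s, xt s = (1 - σ s) • x₀ + σ s • e
        + (ε * (s ^ 3 / ε ^ 3 - 2 * s ^ 2 / ε ^ 2 + s / ε)) • v₀) :
    xt 0 = x₀ ∧ xt ε = e ∧ HasDerivAt xt v₀ 0 ∧ HasDerivAt xt 0 ε ∧
    (LinearIndependent ℝ ![x₀, e] →
      0 < sInf ((fun r : ℝ => ‖(1 - r) • x₀ + r • e‖) '' Set.Icc 0 1) ∧
      (0 < R → ‖v₀‖ ≤ R →
        4 * ε * R < sInf ((fun r : ℝ => ‖(1 - r) • x₀ + r • e‖) '' Set.Icc 0 1) →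
        ∀ s ∈ Set.Icc (0:ℝ) ε, xt s ≠ 0)) := by
  have hεne : ε ≠ 0 := hε.ne'
  -- σ at endpoints
  have hσ0 : σ 0 = 0 := by rw [hσ]; simp
  have hσε : σ ε = 1 := by rw [hσ]; field_simp; ring
  -- general derivative formula
  have key : ∀ t : ℝ, HasDerivAt xt
      ((-(3 * (2 * t) / ε ^ 2 - 2 * (3 * t ^ 2) / ε ^ 3)) • x₀
        + (3 * (2 * t) / ε ^ 2 - 2 * (3 * t ^ 2) / ε ^ 3) • e
        + (ε * (3 * t ^ 2 / ε ^ 3 - 2 * (2 * t) / ε ^ 2 + 1 / ε)) • v₀) t := by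
    intro t
    have hfun : xt = fun s => (1 - σ s) • x₀ + σ s • e
        + (ε * (s ^ 3 / ε ^ 3 - 2 * s ^ 2 / ε ^ 2 + s / ε)) • v₀ := funext hxt
    have hσfun : σ = fun s => 3 * s ^ 2 / ε ^ 2 - 2 * s ^ 3 / ε ^ 3 := funext hσ
    rw [hfun, hσfun]
    have h2 : HasDerivAt (fun s : ℝ => s ^ 2) (2 * t) t := by
      simpa using hasDerivAt_pow 2 t
    have h3 : HasDerivAt (fun s : ℝ => s ^ 3) (3 * t ^ 2) t := by
      simpa using hasDerivAt_pow 3 t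
    have hσ' : HasDerivAt (fun s : ℝ => 3 * s ^ 2 / ε ^ 2 - 2 * s ^ 3 / ε ^ 3)
        (3 * (2 * t) / ε ^ 2 - 2 * (3 * t ^ 2) / ε ^ 3) t :=
      ((h2.const_mul 3).div_const _).sub ((h3.const_mul 2).div_const _)
    have hC' : HasDerivAt (fun s : ℝ => ε * (s ^ 3 / ε ^ 3 - 2 * s ^ 2 / ε ^ 2 + s / ε))
        (ε * (3 * t ^ 2 / ε ^ 3 - 2 * (2 * t) / ε ^ 2 + 1 / ε)) t :=
      (((h3.div_const _).sub ((h2.const_mul 2).div_const _)).add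
        ((hasDerivAt_id t).div_const _)).const_mul ε
    exact (((hσ'.const_sub 1).smul_const x₀).add (hσ'.smul_const e)).add (hC'.smul_const v₀)
  refine ⟨?_, ?_, ?_, ?_, ?_⟩
  · rw [hxt, hσ0]; simp
  · have hC : ε * (ε ^ 3 / ε ^ 3 - 2 * ε ^ 2 / ε ^ 2 + ε / ε) = 0 := by
      field_simp; ring
    rw [hxt, hσε, hC]; simp
  · have h := key 0
    have h0 : 3 * (2 * (0:ℝ)) / ε ^ 2 - 2 * (3 * (0:ℝ) ^ 2) / ε ^ 3 = 0 := by norm_num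
    have h1 : ε * (3 * (0:ℝ) ^ 2 / ε ^ 3 - 2 * (2 * 0) / ε ^ 2 + 1 / ε) = 1 := by
      field_simp; ring
    rw [h0, h1] at h
    simpa using h
  · have h := key ε
    have h1 : 3 * (2 * ε) / ε ^ 2 - 2 * (3 * ε ^ 2) / ε ^ 3 = 0 := by
      field_simp; ring
    have h2 : ε * (3 * ε ^ 2 / ε ^ 3 - 2 * (2 * ε) / ε ^ 2 + 1 / ε) = 0 := by
      field_simp; ring
    rw [h1, h2] at h
    simpa using h
  · intro hli
    set f : ℝ → ℝ := fun r => ‖(1 - r) • x₀ + r • e‖ with hf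
    have hcont : Continuous f := by
      apply Continuous.norm
      exact ((continuous_const.sub continuous_id).smul continuous_const).add
        (continuous_id.smul continuous_const)
    have hne : ∀ r : ℝ, (1 - r) • x₀ + r • e ≠ 0 := by
      intro r h
      obtain ⟨h1, h2⟩ := (LinearIndependent.pair_iff.mp hli) (1 - r) r h
      rw [h2] at h1; norm_num at h1
    have hcpt : IsCompact (f '' Set.Icc 0 1) :=
      (isCompact_Icc).image hcont
    have hnonempty : (f '' Set.Icc 0 1).Nonempty :=
      ⟨f 0, ⟨0, by simp, rfl⟩⟩
    have hmem := hcpt.sInf_mem hnonempty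
    obtain ⟨r, hr, hrv⟩ := hmem
    have hbdd : BddBelow (f '' Set.Icc 0 1) :=
      ⟨0, fun y ⟨r, _, hy⟩ => hy ▸ norm_nonneg _⟩
    have hcpos : 0 < sInf (f '' Set.Icc 0 1) := by
      rw [← hrv]; exact norm_pos_iff.mpr (hne r)
    refine ⟨hcpos, ?_⟩
    intro hR hv hlt s hs hzero
    obtain ⟨hs0, hsε⟩ := hs
    -- σ s ∈ [0,1]
    have hσs0 : 0 ≤ σ s := by
      rw [hσ]
      have h1 : 3 * s ^ 2 / ε ^ 2 - 2 * s ^ 3 / ε ^ 3 = s ^ 2 * (3 * ε - 2 * s) / ε ^ 3 := by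
        field_simp
      rw [h1]
      apply div_nonneg _ (by positivity)
      nlinarith
    have hσs1 : σ s ≤ 1 := by
      rw [hσ]
      rw [div_sub_div _ _ (by positivity : (ε:ℝ)^2 ≠ 0) (by positivity : (ε:ℝ)^3 ≠ 0),
        div_le_one (by positivity)]
      nlinarith [mul_nonneg (mul_nonneg (sq_nonneg (ε - s))
        (by positivity : (0:ℝ) ≤ ε ^ 2)) (by linarith : (0:ℝ) ≤ ε + 2 * s)]
    -- |C(s)| ≤ ε/4
    set C : ℝ := ε * (s ^ 3 / ε ^ 3 - 2 * s ^ 2 / ε ^ 2 + s / ε) with hCdef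
    have hC0 : 0 ≤ C := by
      have : C = s * (ε - s) ^ 2 / ε ^ 2 := by rw [hCdef]; field_simp; ring
      rw [this]; positivity
    have hC4 : C ≤ ε / 4 := by
      have h1 : C = s * (ε - s) ^ 2 / ε ^ 2 := by rw [hCdef]; field_simp; ring
      rw [h1, div_le_div_iff₀ (by positivity) (by norm_num : (0:ℝ) < 4)]
      nlinarith [sq_nonneg (ε - 2 * s), sq_nonneg s, mul_nonneg hs0 (sq_nonneg (ε - s))]
    -- membership of the core point
    have hmem2 : f (σ s) ∈ f '' Set.Icc 0 1 := ⟨σ s, ⟨hσs0, hσs1⟩, rfl⟩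
    have hle : sInf (f '' Set.Icc 0 1) ≤ f (σ s) := csInf_le hbdd hmem2
    -- from xt s = 0
    have heq : (1 - σ s) • x₀ + σ s • e = -(C • v₀) := by
      have := hxt s
      rw [hzero] at this
      rw [← hCdef] at this
      linear_combination (norm := module) -this
    have hnorm : f (σ s) ≤ ε / 4 * R := by
      rw [hf]
      simp only [heq, norm_neg, norm_smul, Real.norm_eq_abs, abs_of_nonneg hC0]
      calc C * ‖v₀‖ ≤ C * R := by
            exact mul_le_mul_of_nonneg_left hv hC0
        _ ≤ ε / 4 * R := mul_le_mul_of_nonneg_right hC4 hR.le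
    have hεR : 0 < ε * R := mul_pos hε hR
    linarith
end

section
/- Let K : [0,∞) → (0,∞) be continuously differentiable with K′(s) ≤ −δ·K(s) for all s ≥ 0, where δ > 0. Let p ≥ 1, let t > 0, let η₀ : [0,∞) → ℝ^d be measurable with ∫₀^∞ |η₀(s)|^p K(s) ds < ∞, and let y : [0,t] → ℝ^d be continuous. Define the concatenated history η_t : [0,∞) → ℝ^d by η_t(s) = y(t−s) for s ∈ [0,t] and η_t(s) = η₀(s−t) for s > t. Then ∫₀^∞ |η_t(s)|^p K(s) ds ≤ e^{−δt} ∫₀^∞ |η₀(s)|^p K(s) ds + K(0) ∫₀^t e^{−δ(t−u)} |y(u)|^p du. -/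
open MeasureTheory Set Real

/-- Dissipative bound for the concatenated memory history: if `K′ ≤ −δK` and
`η_t(s) = y(t−s)` for `s ∈ [0,t]`, `η_t(s) = η₀(s−t)` for `s > t`, then
`∫₀^∞ |η_t|^p K ≤ e^{−δt} ∫₀^∞ |η₀|^p K + K(0) ∫₀^t e^{−δ(t−u)} |y(u)|^p du`. -/
theorem memory_history_bound (d : ℕ) (hd : 1 ≤ d) (δ : ℝ) (hδ : 0 < δ)
    (K : ℝ → ℝ) (hKpos : ∀ s ≥ (0:ℝ), 0 < K s)
    (hK : ContDiffOn ℝ 1 K (Set.Ici 0))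
    (hK' : ∀ s ≥ (0:ℝ), derivWithin K (Set.Ici 0) s ≤ -δ * K s)
    (p : ℝ) (hp : 1 ≤ p) (t : ℝ) (ht : 0 < t)
    (η₀ : ℝ → EuclideanSpace ℝ (Fin d)) (hη₀ : Measurable η₀)
    (hint : IntegrableOn (fun s => ‖η₀ s‖ ^ p * K s) (Set.Ioi 0))
    (y : ℝ → EuclideanSpace ℝ (Fin d)) (hy : ContinuousOn y (Set.Icc 0 t))
    (ηt : ℝ → EuclideanSpace ℝ (Fin d))
    (hηt1 : ∀ s ∈ Set.Icc (0:ℝ) t, ηt s = y (t - s))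
    (hηt2 : ∀ s > t, ηt s = η₀ (s - t)) :
    (∫ s in Set.Ioi (0:ℝ), ‖ηt s‖ ^ p * K s) ≤
      Real.exp (-δ * t) * (∫ s in Set.Ioi (0:ℝ), ‖η₀ s‖ ^ p * K s)
      + K 0 * ∫ u in (0:ℝ)..t, Real.exp (-δ * (t - u)) * ‖y u‖ ^ p := by
  have hKcont : ContinuousOn K (Set.Ici 0) := hK.continuousOn
  -- decay lemma
  have hdecay : ∀ a b : ℝ, 0 ≤ a → a ≤ b → K b ≤ Real.exp (-δ * (b - a)) * K a := by
    intro a b ha hab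
    have hanti : AntitoneOn (fun s => Real.exp (δ * s) * K s) (Set.Ici 0) := by
      apply antitoneOn_of_deriv_nonpos (convex_Ici 0)
      · exact (Real.continuous_exp.comp (continuous_const.mul continuous_id)).continuousOn.mul hKcont
      · intro x hx
        rw [interior_Ici] at hx
        have hx' : Set.Ici (0:ℝ) ∈ nhds x := Ici_mem_nhds hx
        have hKd : DifferentiableAt ℝ K x :=
          ((hK.differentiableOn one_ne_zero) x (Set.mem_Ici.mpr (le_of_lt hx))).differentiableAt hx'
        exact ((Real.differentiable_exp.comp ((differentiable_const δ).mul differentiable_id) x).mul hKd).differentiableWithinAt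
      · intro x hx
        rw [interior_Ici] at hx
        have hx' : Set.Ici (0:ℝ) ∈ nhds x := Ici_mem_nhds hx
        have hKd : DifferentiableAt ℝ K x :=
          ((hK.differentiableOn one_ne_zero) x (Set.mem_Ici.mpr (le_of_lt hx))).differentiableAt hx'
        have hed : DifferentiableAt ℝ (fun s => Real.exp (δ * s)) x :=
          Real.differentiable_exp.comp ((differentiable_const δ).mul differentiable_id) x
        have : deriv (fun s => Real.exp (δ * s) * K s) x
            = (δ * Real.exp (δ * x)) * K x + Real.exp (δ * x) * deriv K x := by
          rw [deriv_fun_mul hed hKd]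
          congr 1
          have : deriv (fun s => Real.exp (δ * s)) x = Real.exp (δ * x) * δ := by
            have := (Real.hasDerivAt_exp (δ * x)).comp x ((hasDerivAt_id x).const_mul δ)
            simpa [mul_comm, Function.comp_def] using this.deriv
          rw [this]; ring
        rw [this]
        have hdK : deriv K x = derivWithin K (Set.Ici 0) x :=
          (derivWithin_of_mem_nhds hx').symm
        have hb := hK' x (le_of_lt hx)
        rw [← hdK] at hb
        have hexp : (0:ℝ) < Real.exp (δ * x) := Real.exp_pos _
        nlinarith [hexp.le, mul_le_mul_of_nonneg_left hb hexp.le]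
    have key : Real.exp (δ * b) * K b ≤ Real.exp (δ * a) * K a :=
      hanti (Set.mem_Ici.mpr ha) (Set.mem_Ici.mpr (ha.trans hab)) hab
    have h2 : K b ≤ Real.exp (δ * a - δ * b) * K a := by
      rw [Real.exp_sub, div_mul_eq_mul_div, le_div_iff₀ (Real.exp_pos _)]
      linarith [key]
    have heq : -δ * (b - a) = δ * a - δ * b := by ring
    rw [heq]; exact h2
  -- continuity of rpow
  have hp0 : (0:ℝ) < p := lt_of_lt_of_le one_pos hp
  have hpowc : Continuous fun x : ℝ => x ^ p :=
    continuous_iff_continuousAt.mpr fun x => Real.continuousAt_rpow_const x p (Or.inr hp0.le)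
  set g0 : ℝ → ℝ := fun u => ‖η₀ u‖ ^ p * K u with hg0
  set f : ℝ → ℝ := fun s => ‖ηt s‖ ^ p * K s with hf
  -- piece 1 : continuity and integrability on Ioc 0 t
  have hyc : ContinuousOn (fun s : ℝ => ‖y (t - s)‖ ^ p * K s) (Set.Icc 0 t) := by
    apply ContinuousOn.mul
    · apply hpowc.comp_continuousOn
      apply ContinuousOn.norm
      apply hy.comp (continuous_const.sub continuous_id).continuousOn
      intro s hs
      simp only [Set.mem_Icc] at hs ⊢
      simp only [Pi.sub_apply, id]
      constructor <;> linarith [hs.1, hs.2]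
    · exact hKcont.mono (fun s hs => hs.1)
  have hint1y : IntegrableOn (fun s : ℝ => ‖y (t - s)‖ ^ p * K s) (Set.Ioc 0 t) :=
    (hyc.integrableOn_Icc).mono_set Set.Ioc_subset_Icc_self
  have heqon1 : Set.EqOn (fun s : ℝ => ‖y (t - s)‖ ^ p * K s) f (Set.Ioc 0 t) := by
    intro s hs
    simp only [hf, hηt1 s (Set.Ioc_subset_Icc_self hs)]
  have hint1 : IntegrableOn f (Set.Ioc 0 t) :=
    hint1y.congr_fun heqon1 measurableSet_Ioc
  -- piece 2 : translation
  have himg : (fun x : ℝ => x + t) '' Set.Ioi 0 = Set.Ioi t := by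
    ext x
    simp only [Set.mem_image, Set.mem_Ioi]
    constructor
    · rintro ⟨u, hu, rfl⟩; linarith
    · intro hx; exact ⟨x - t, by linarith, by ring⟩
  have hmp := measurePreserving_add_right (volume : Measure ℝ) t
  have hme := measurableEmbedding_addRight t
  have hint2t : IntegrableOn (fun s : ℝ => g0 (s - t)) (Set.Ioi t) := by
    have := (hmp.integrableOn_image hme (f := fun s : ℝ => g0 (s - t)) (s := Set.Ioi 0)).mpr
    rw [himg] at this
    apply this
    have : ((fun s : ℝ => g0 (s - t)) ∘ fun x => x + t) = g0 := by
      funext u; simp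
    rw [this]; exact hint
  have h2eq : (∫ s in Set.Ioi t, g0 (s - t)) = ∫ u in Set.Ioi 0, g0 u := by
    rw [← himg, hmp.setIntegral_image_emb hme]
    simp
  -- f on Ioi t
  have heqon2 : Set.EqOn f (fun s : ℝ => ‖η₀ (s - t)‖ ^ p * K s) (Set.Ioi t) := by
    intro s hs
    simp only [hf, hηt2 s hs]
  have hboundint : IntegrableOn (fun s : ℝ => Real.exp (-δ * t) * g0 (s - t)) (Set.Ioi t) :=
    hint2t.const_mul _
  have hptwise2 : ∀ s ∈ Set.Ioi t, ‖η₀ (s - t)‖ ^ p * K s ≤ Real.exp (-δ * t) * g0 (s - t) := by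
    intro s hs
    simp only [Set.mem_Ioi] at hs
    have h1 : K s ≤ Real.exp (-δ * t) * K (s - t) := by
      have := hdecay (s - t) s (by linarith) (by linarith)
      simpa using this
    have hnn : (0:ℝ) ≤ ‖η₀ (s - t)‖ ^ p := Real.rpow_nonneg (norm_nonneg _) p
    calc ‖η₀ (s - t)‖ ^ p * K s ≤ ‖η₀ (s - t)‖ ^ p * (Real.exp (-δ * t) * K (s - t)) :=
          mul_le_mul_of_nonneg_left h1 hnn
      _ = Real.exp (-δ * t) * g0 (s - t) := by simp only [hg0]; ring
  have hasm2 : AEStronglyMeasurable (fun s : ℝ => ‖η₀ (s - t)‖ ^ p * K s)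
      ((volume : Measure ℝ).restrict (Set.Ioi t)) := by
    apply AEStronglyMeasurable.mul
    · exact (hpowc.comp continuous_norm).measurable.comp
        (hη₀.comp (measurable_id.sub measurable_const)) |>.aestronglyMeasurable
    · exact (hKcont.mono (fun s (hs : s ∈ Set.Ioi t) => le_of_lt (lt_of_le_of_lt ht.le hs))
        |>.aestronglyMeasurable measurableSet_Ioi)
  have hint2f' : IntegrableOn (fun s : ℝ => ‖η₀ (s - t)‖ ^ p * K s) (Set.Ioi t) := by
    apply Integrable.mono' hboundint hasm2
    rw [ae_restrict_iff' measurableSet_Ioi]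
    filter_upwards with s hs
    have hnn : (0:ℝ) ≤ ‖η₀ (s - t)‖ ^ p * K s := by
      have := hKpos s (le_of_lt (lt_of_le_of_lt ht.le hs))
      positivity
    rw [Real.norm_of_nonneg hnn]
    exact hptwise2 s hs
  have hint2 : IntegrableOn f (Set.Ioi t) :=
    hint2f'.congr_fun heqon2.symm measurableSet_Ioi
  -- split the integral
  have hsplit : (∫ s in Set.Ioi (0:ℝ), f s)
      = (∫ s in Set.Ioc 0 t, f s) + ∫ s in Set.Ioi t, f s := by
    rw [← setIntegral_union (Set.Ioc_disjoint_Ioi le_rfl) measurableSet_Ioi hint1 hint2,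
      Set.Ioc_union_Ioi_eq_Ioi ht.le]
  -- bound piece 2
  have hb2 : (∫ s in Set.Ioi t, f s)
      ≤ Real.exp (-δ * t) * ∫ u in Set.Ioi 0, g0 u := by
    rw [setIntegral_congr_fun measurableSet_Ioi heqon2]
    calc (∫ s in Set.Ioi t, ‖η₀ (s - t)‖ ^ p * K s)
        ≤ ∫ s in Set.Ioi t, Real.exp (-δ * t) * g0 (s - t) :=
          setIntegral_mono_on hint2f' hboundint measurableSet_Ioi hptwise2
      _ = Real.exp (-δ * t) * ∫ s in Set.Ioi t, g0 (s - t) := by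
          rw [integral_const_mul]
      _ = Real.exp (-δ * t) * ∫ u in Set.Ioi 0, g0 u := by rw [h2eq]
  -- bound piece 1
  have hbc : ContinuousOn (fun s : ℝ => K 0 * (Real.exp (-δ * s) * ‖y (t - s)‖ ^ p))
      (Set.Icc 0 t) := by
    apply ContinuousOn.mul continuousOn_const
    apply ContinuousOn.mul
    · exact (Real.continuous_exp.comp (continuous_const.mul continuous_id)).continuousOn
    · apply hpowc.comp_continuousOn
      apply ContinuousOn.norm
      apply hy.comp (continuous_const.sub continuous_id).continuousOn
      intro s hs
      simp only [Set.mem_Icc] at hs ⊢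
      simp only [Pi.sub_apply, id]
      constructor <;> linarith [hs.1, hs.2]
  have hbint : IntegrableOn (fun s : ℝ => K 0 * (Real.exp (-δ * s) * ‖y (t - s)‖ ^ p))
      (Set.Ioc 0 t) := (hbc.integrableOn_Icc).mono_set Set.Ioc_subset_Icc_self
  have hb1 : (∫ s in Set.Ioc 0 t, f s)
      ≤ ∫ s in Set.Ioc 0 t, K 0 * (Real.exp (-δ * s) * ‖y (t - s)‖ ^ p) := by
    rw [setIntegral_congr_fun measurableSet_Ioc heqon1.symm]
    apply setIntegral_mono_on hint1y hbint measurableSet_Ioc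
    intro s hs
    have h1 : K s ≤ Real.exp (-δ * s) * K 0 := by
      have := hdecay 0 s le_rfl (le_of_lt hs.1)
      simpa using this
    have hnn : (0:ℝ) ≤ ‖y (t - s)‖ ^ p := Real.rpow_nonneg (norm_nonneg _) p
    calc ‖y (t - s)‖ ^ p * K s ≤ ‖y (t - s)‖ ^ p * (Real.exp (-δ * s) * K 0) :=
          mul_le_mul_of_nonneg_left h1 hnn
      _ = K 0 * (Real.exp (-δ * s) * ‖y (t - s)‖ ^ p) := by ring
  -- rewrite piece-1 bound as the interval integral
  have hival : (∫ s in Set.Ioc 0 t, K 0 * (Real.exp (-δ * s) * ‖y (t - s)‖ ^ p))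
      = K 0 * ∫ u in (0:ℝ)..t, Real.exp (-δ * (t - u)) * ‖y u‖ ^ p := by
    rw [← intervalIntegral.integral_of_le ht.le, intervalIntegral.integral_const_mul]
    congr 1
    have := intervalIntegral.integral_comp_sub_left
      (a := (0:ℝ)) (b := t) (fun u => Real.exp (-δ * (t - u)) * ‖y u‖ ^ p) t
    simp only [sub_self, sub_zero] at this
    rw [← this]
    apply intervalIntegral.integral_congr
    intro s _
    congr 2
    ring
  calc (∫ s in Set.Ioi (0:ℝ), f s) = (∫ s in Set.Ioc 0 t, f s) + ∫ s in Set.Ioi t, f s := hsplit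
    _ ≤ (∫ s in Set.Ioc 0 t, K 0 * (Real.exp (-δ * s) * ‖y (t - s)‖ ^ p))
        + Real.exp (-δ * t) * ∫ u in Set.Ioi 0, g0 u := add_le_add hb1 hb2
    _ = Real.exp (-δ * t) * (∫ s in Set.Ioi (0:ℝ), ‖η₀ s‖ ^ p * K s)
        + K 0 * ∫ u in (0:ℝ)..t, Real.exp (-δ * (t - u)) * ‖y u‖ ^ p := by
        rw [hival]; ring
end

section
/- Let K : [0,∞) → (0,∞) be continuously differentiable with K′(s) ≤ −δ·K(s) for all s ≥ 0, where δ > 0. Let p ≥ 1, let η₀ : [0,∞) → ℝ^d be measurable with ∫₀^∞ |η₀(s)|^p K(s) ds < ∞, and let y : [0,∞) → ℝ^d be continuous and satisfy |y(u)| ≤ M·e^{−γu} for all u ≥ 0, for some constants M, γ > 0. For each t ≥ 0 define η_t : [0,∞) → ℝ^d by η_t(s) = y(t−s) for s ∈ [0,t] and η_t(s) = η₀(s−t) for s > t. Then there exist constants C, c > 0, depending only on δ, γ, p and K(0), such that for all t ≥ 0: ∫₀^∞ |η_t(s)|^p K(s) ds ≤ C·e^{−ct}·(∫₀^∞ |η₀(s)|^p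 K(s) ds + M^p). -/
open MeasureTheory Set Real

lemma K_decay {δ : ℝ} {K : ℝ → ℝ}
    (hK1 : ContDiffOn ℝ 1 K (Set.Ici 0))
    (hK' : ∀ s ≥ (0:ℝ), derivWithin K (Set.Ici 0) s ≤ -δ * K s) :
    ∀ a ≥ (0:ℝ), ∀ b ≥ (0:ℝ), K (a + b) ≤ K a * Real.exp (-δ * b) := by
  have hanti : AntitoneOn (fun s => K s * Real.exp (δ * s)) (Set.Ici 0) := by
    apply antitoneOn_of_deriv_nonpos (convex_Ici 0)
    · exact (hK1.continuousOn.mul ((Real.continuous_exp.comp (continuous_const.mul continuous_id)).continuousOn))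
    · intro x hx
      rw [interior_Ici] at hx
      have hKd : DifferentiableAt ℝ K x :=
        ((hK1.differentiableOn one_ne_zero) x (mem_Ici.2 hx.le)).differentiableAt (Ici_mem_nhds hx)
      exact ((hKd.mul ((Real.differentiable_exp.comp ((differentiable_const δ).mul differentiable_id)) x)).differentiableWithinAt)
    · intro x hx
      rw [interior_Ici] at hx
      have hKdiff : DifferentiableAt ℝ K x :=
        ((hK1.differentiableOn one_ne_zero) x (mem_Ici.2 hx.le)).differentiableAt (Ici_mem_nhds hx)
      have he : HasDerivAt (fun s : ℝ => Real.exp (δ * s)) (Real.exp (δ * x) * δ) x := by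
        have := ((hasDerivAt_id x).const_mul δ).exp
        simpa [mul_comm] using this
      have hg : HasDerivAt (fun s => K s * Real.exp (δ * s))
          (deriv K x * Real.exp (δ * x) + K x * (Real.exp (δ * x) * δ)) x :=
        hKdiff.hasDerivAt.mul he
      rw [hg.deriv]
      have hdw : derivWithin K (Set.Ici 0) x = deriv K x :=
        derivWithin_of_mem_nhds (Ici_mem_nhds hx)
      have h1 : deriv K x ≤ -δ * K x := by rw [← hdw]; exact hK' x hx.le
      have hexp : (0:ℝ) < Real.exp (δ * x) := Real.exp_pos _
      nlinarith [mul_le_mul_of_nonneg_right h1 hexp.le]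
  intro a ha b hb
  have h := hanti (mem_Ici.2 ha) (mem_Ici.2 (by linarith : (0:ℝ) ≤ a + b)) (by linarith)
  simp only at h
  have := mul_le_mul_of_nonneg_right h (Real.exp_pos (-(δ * (a+b)))).le
  calc K (a + b) = K (a+b) * Real.exp (δ * (a+b)) * Real.exp (-(δ * (a+b))) := by
        rw [mul_assoc, ← Real.exp_add]; simp
    _ ≤ K a * Real.exp (δ * a) * Real.exp (-(δ * (a+b))) := this
    _ = K a * Real.exp (-δ * b) := by
        rw [mul_assoc, ← Real.exp_add]; ring_nf

lemma shift_integral (g : ℝ → ℝ) (t : ℝ) :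
    ∫ s in Set.Ioi t, g (s - t) = ∫ s in Set.Ioi (0:ℝ), g s := by
  have key : ∀ s : ℝ, (Set.Ioi t).indicator (fun s => g (s - t)) s
      = (Set.Ioi (0:ℝ)).indicator g (s - t) := by
    intro s
    by_cases h : s ∈ Set.Ioi t
    · rw [Set.indicator_of_mem h, Set.indicator_of_mem (by simp at h ⊢; linarith)]
    · rw [Set.indicator_of_notMem h, Set.indicator_of_notMem (by simp at h ⊢; linarith)]
  calc ∫ s in Set.Ioi t, g (s - t)
      = ∫ s, (Set.Ioi t).indicator (fun s => g (s - t)) s :=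
        (integral_indicator measurableSet_Ioi).symm
    _ = ∫ s, (Set.Ioi (0:ℝ)).indicator g (s - t) := by simp_rw [key]
    _ = ∫ s, (Set.Ioi (0:ℝ)).indicator g s := integral_sub_right_eq_self _ t
    _ = ∫ s in Set.Ioi (0:ℝ), g s := integral_indicator measurableSet_Ioi

lemma shift_integrableOn {g : ℝ → ℝ} (hg : IntegrableOn g (Set.Ioi (0:ℝ))) (t : ℝ) :
    IntegrableOn (fun s => g (s - t)) (Set.Ioi t) := by
  have key : ∀ s : ℝ, (Set.Ioi t).indicator (fun s => g (s - t)) s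
      = (Set.Ioi (0:ℝ)).indicator g (s - t) := by
    intro s
    by_cases h : s ∈ Set.Ioi t
    · rw [Set.indicator_of_mem h, Set.indicator_of_mem (by simp at h ⊢; linarith)]
    · rw [Set.indicator_of_notMem h, Set.indicator_of_notMem (by simp at h ⊢; linarith)]
  have : Integrable (fun s => (Set.Ioi (0:ℝ)).indicator g (s - t)) := by
    have := (integrable_indicator_iff measurableSet_Ioi).2 hg
    exact this.comp_sub_right t
  exact (integrable_indicator_iff measurableSet_Ioi).1
    (this.congr (Filter.Eventually.of_forall fun s => (key s).symm))

/-- Exponential decay of the memory component (inequality (4.10) of the paper):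
if `K′ ≤ −δK`, `|y(u)| ≤ M e^{−γu}`, and `η_t` is the concatenated history, then
`∫₀^∞ |η_t|^p K ≤ C e^{−ct}(∫₀^∞ |η₀|^p K + M^p)` with `C, c` depending only on
`δ, γ, p` and `K(0)`. -/
theorem memory_history_decay (δ γ p k0 : ℝ) (hδ : 0 < δ) (hγ : 0 < γ) (hp : 1 ≤ p) :
    ∃ C > (0:ℝ), ∃ c > (0:ℝ), ∀ (d : ℕ), 1 ≤ d →
      ∀ K : ℝ → ℝ, (∀ s ≥ (0:ℝ), 0 < K s) →
        ContDiffOn ℝ 1 K (Set.Ici 0) →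
        (∀ s ≥ (0:ℝ), derivWithin K (Set.Ici 0) s ≤ -δ * K s) →
        K 0 = k0 →
      ∀ η₀ : ℝ → EuclideanSpace ℝ (Fin d), Measurable η₀ →
        IntegrableOn (fun s => ‖η₀ s‖ ^ p * K s) (Set.Ioi 0) →
      ∀ y : ℝ → EuclideanSpace ℝ (Fin d), ContinuousOn y (Set.Ici 0) →
      ∀ M > (0:ℝ), (∀ u ≥ (0:ℝ), ‖y u‖ ≤ M * Real.exp (-γ * u)) →
      ∀ η : ℝ → ℝ → EuclideanSpace ℝ (Fin d),
        (∀ t ≥ (0:ℝ), ∀ s ∈ Set.Icc (0:ℝ) t, η t s = y (t - s)) →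
        (∀ t ≥ (0:ℝ), ∀ s > t, η t s = η₀ (s - t)) →
      ∀ t ≥ (0:ℝ),
        (∫ s in Set.Ioi (0:ℝ), ‖η t s‖ ^ p * K s) ≤
          C * Real.exp (-c * t) * ((∫ s in Set.Ioi (0:ℝ), ‖η₀ s‖ ^ p * K s) + M ^ p) := by
  set c₀ : ℝ := min (γ * p) δ with hc₀def
  have hc₀ : 0 < c₀ := lt_min (mul_pos hγ (by linarith)) hδ
  refine ⟨1 + 2 * |k0| / c₀, by positivity, c₀ / 2, by positivity, ?_⟩
  intro d hd K hKpos hKC1 hK' hK0 η₀ hη₀m hη₀int y hycont M hM hy η hη1 hη2 t ht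
  set C : ℝ := 1 + 2 * |k0| / c₀ with hCdef
  set c : ℝ := c₀ / 2 with hcdef
  have hk0pos : 0 < k0 := hK0 ▸ hKpos 0 le_rfl
  have habs : |k0| = k0 := abs_of_pos hk0pos
  have hKdec := K_decay hKC1 hK'
  -- notation
  set g : ℝ → ℝ := fun s => ‖η₀ s‖ ^ p * K s with hgdef
  set I : ℝ := ∫ s in Set.Ioi (0:ℝ), g s with hIdef
  have hI0 : 0 ≤ I := setIntegral_nonneg measurableSet_Ioi fun s hs =>
    mul_nonneg (Real.rpow_nonneg (norm_nonneg _) _) (hKpos s (le_of_lt hs)).le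
  have hMp : 0 ≤ M ^ p := Real.rpow_nonneg hM.le _
  -- continuity of K on Ici 0
  have hKcont : ContinuousOn K (Set.Ici 0) := hKC1.continuousOn
  -- piece 1 : IntegrableOn over Ioc 0 t, with function y (t - s)
  have hf1cont : ContinuousOn (fun s => ‖y (t - s)‖ ^ p * K s) (Set.Icc 0 t) := by
    have hmap : MapsTo (fun s : ℝ => t - s) (Set.Icc 0 t) (Set.Ici 0) := by
      intro s hs; simp only [mem_Icc] at hs; simp only [mem_Ici]; linarith [hs.2]
    have hrpow : Continuous (fun x : ℝ => x ^ p) := by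
      rw [continuous_iff_continuousAt]
      intro x
      exact Real.continuousAt_rpow_const x p (Or.inr (by linarith))
    have h1 : ContinuousOn (fun s => ‖y (t - s)‖ ^ p) (Set.Icc 0 t) := by
      apply (hrpow.comp continuous_norm).comp_continuousOn
      exact hycont.comp (continuous_const.sub continuous_id).continuousOn hmap
    exact h1.mul (hKcont.mono (fun s hs => (mem_Icc.1 hs).1))
  have h2 : IntegrableOn (fun s => ‖y (t - s)‖ ^ p * K s) (Set.Ioc 0 t) :=
    (hf1cont.integrableOn_Icc).mono_set Set.Ioc_subset_Icc_self
  -- piece 2 : IntegrableOn over Ioi t of ‖η₀ (s-t)‖^p * K s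
  have hgshift : IntegrableOn (fun s => g (s - t)) (Set.Ioi t) := shift_integrableOn hη₀int t
  have hbound2 : ∀ s ∈ Set.Ioi t, ‖η₀ (s - t)‖ ^ p * K s ≤ Real.exp (-δ * t) * g (s - t) := by
    intro s hs
    rw [mem_Ioi] at hs
    have hst : (0:ℝ) ≤ s - t := by linarith
    have hKle : K s ≤ K (s - t) * Real.exp (-δ * t) := by
      have h := hKdec (s - t) hst t ht
      have heq : s - t + t = s := by ring
      rwa [heq] at h
    have hnn : (0:ℝ) ≤ ‖η₀ (s - t)‖ ^ p := Real.rpow_nonneg (norm_nonneg _) _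
    calc ‖η₀ (s - t)‖ ^ p * K s ≤ ‖η₀ (s - t)‖ ^ p * (K (s - t) * Real.exp (-δ * t)) :=
          mul_le_mul_of_nonneg_left hKle hnn
      _ = Real.exp (-δ * t) * g (s - t) := by simp only [hgdef]; ring
  have haem2 : AEStronglyMeasurable (fun s => ‖η₀ (s - t)‖ ^ p * K s)
      (volume.restrict (Set.Ioi t)) := by
    have hm1 : Measurable (fun s : ℝ => ‖η₀ (s - t)‖ ^ p) := by
      have : Measurable (fun s : ℝ => ‖η₀ (s - t)‖) :=
        (measurable_norm.comp hη₀m).comp (measurable_id.sub_const t)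
      exact this.pow_const p
    have hm2 : AEMeasurable K (volume.restrict (Set.Ioi t)) :=
      (hKcont.mono (fun s hs => le_of_lt (lt_of_le_of_lt ht hs))).aemeasurable measurableSet_Ioi
    exact (hm1.aemeasurable.mul hm2).aestronglyMeasurable
  have h3 : IntegrableOn (fun s => ‖η₀ (s - t)‖ ^ p * K s) (Set.Ioi t) := by
    apply Integrable.mono' (hgshift.const_mul (Real.exp (-δ * t))) haem2
    filter_upwards [ae_restrict_mem measurableSet_Ioi] with s hs
    rw [Real.norm_eq_abs, abs_of_nonneg (mul_nonneg (Real.rpow_nonneg (norm_nonneg _) _)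
      (hKpos s (le_of_lt (lt_of_le_of_lt ht hs))).le)]
    exact hbound2 s hs
  -- rewrite η on the pieces
  have heq1 : EqOn (fun s => ‖η t s‖ ^ p * K s) (fun s => ‖y (t - s)‖ ^ p * K s) (Set.Ioc 0 t) := by
    intro s hs
    rw [mem_Ioc] at hs
    simp only [hη1 t ht s (mem_Icc.2 ⟨hs.1.le, hs.2⟩)]
  have heq2 : EqOn (fun s => ‖η t s‖ ^ p * K s) (fun s => ‖η₀ (s - t)‖ ^ p * K s) (Set.Ioi t) := by
    intro s hs
    simp only [hη2 t ht s (mem_Ioi.1 hs)]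
  have hsplit : Set.Ioc (0:ℝ) t ∪ Set.Ioi t = Set.Ioi 0 := Set.Ioc_union_Ioi_eq_Ioi ht
  have hint1 : IntegrableOn (fun s => ‖η t s‖ ^ p * K s) (Set.Ioc 0 t) := h2.congr_fun heq1.symm measurableSet_Ioc
  have hint2 : IntegrableOn (fun s => ‖η t s‖ ^ p * K s) (Set.Ioi t) := h3.congr_fun heq2.symm measurableSet_Ioi
  have hsum : (∫ s in Set.Ioi (0:ℝ), ‖η t s‖ ^ p * K s)
      = (∫ s in Set.Ioc (0:ℝ) t, ‖η t s‖ ^ p * K s) + ∫ s in Set.Ioi t, ‖η t s‖ ^ p * K s := by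
    rw [← hsplit]
    exact setIntegral_union (Set.Ioc_disjoint_Ioi le_rfl) measurableSet_Ioi hint1 hint2
  -- bound piece 1
  have hpt1 : ∀ s ∈ Set.Ioc (0:ℝ) t, ‖y (t - s)‖ ^ p * K s ≤ M ^ p * k0 * Real.exp (-c₀ * t) := by
    intro s hs
    rw [mem_Ioc] at hs
    have hts : (0:ℝ) ≤ t - s := by linarith [hs.2]
    have hy1 : ‖y (t - s)‖ ^ p ≤ M ^ p * Real.exp (-γ * (t - s) * p) := by
      have h := hy (t - s) hts
      calc ‖y (t - s)‖ ^ p ≤ (M * Real.exp (-γ * (t - s))) ^ p :=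
            Real.rpow_le_rpow (norm_nonneg _) h (by linarith)
        _ = M ^ p * Real.exp (-γ * (t - s) * p) := by
            rw [Real.mul_rpow hM.le (Real.exp_pos _).le, ← Real.exp_mul]
    have hK1 : K s ≤ k0 * Real.exp (-δ * s) := by
      have := hKdec 0 le_rfl s hs.1.le
      simpa [hK0] using this
    have hexp : Real.exp (-γ * (t - s) * p) * Real.exp (-δ * s) ≤ Real.exp (-c₀ * t) := by
      rw [← Real.exp_add]
      apply Real.exp_le_exp.2
      have h1 : c₀ ≤ γ * p := min_le_left _ _
      have h2 : c₀ ≤ δ := min_le_right _ _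
      nlinarith [hs.1.le, hts]
    have hy0 : (0:ℝ) ≤ ‖y (t - s)‖ ^ p := Real.rpow_nonneg (norm_nonneg _) _
    calc ‖y (t - s)‖ ^ p * K s ≤ (M ^ p * Real.exp (-γ * (t - s) * p)) * (k0 * Real.exp (-δ * s)) := by
          apply mul_le_mul hy1 hK1 (hKpos s hs.1.le).le
          positivity
      _ = (M ^ p * k0) * (Real.exp (-γ * (t - s) * p) * Real.exp (-δ * s)) := by ring
      _ ≤ (M ^ p * k0) * Real.exp (-c₀ * t) :=
          mul_le_mul_of_nonneg_left hexp (by positivity)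
      _ = M ^ p * k0 * Real.exp (-c₀ * t) := by ring
  have hb1 : (∫ s in Set.Ioc (0:ℝ) t, ‖η t s‖ ^ p * K s) ≤ M ^ p * k0 * Real.exp (-c₀ * t) * t := by
    rw [setIntegral_congr_fun measurableSet_Ioc heq1]
    calc (∫ s in Set.Ioc (0:ℝ) t, ‖y (t - s)‖ ^ p * K s)
        ≤ ∫ _ in Set.Ioc (0:ℝ) t, M ^ p * k0 * Real.exp (-c₀ * t) :=
          setIntegral_mono_on h2 (integrableOn_const (by
            rw [Real.volume_Ioc]; exact ENNReal.ofReal_ne_top)) measurableSet_Ioc hpt1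
      _ = M ^ p * k0 * Real.exp (-c₀ * t) * t := by
          rw [setIntegral_const, Real.volume_real_Ioc_of_le ht, smul_eq_mul]
          ring
  -- bound piece 2
  have hb2 : (∫ s in Set.Ioi t, ‖η t s‖ ^ p * K s) ≤ Real.exp (-δ * t) * I := by
    rw [setIntegral_congr_fun measurableSet_Ioi heq2]
    calc (∫ s in Set.Ioi t, ‖η₀ (s - t)‖ ^ p * K s)
        ≤ ∫ s in Set.Ioi t, Real.exp (-δ * t) * g (s - t) :=
          setIntegral_mono_on h3 (hgshift.const_mul _) measurableSet_Ioi hbound2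
      _ = Real.exp (-δ * t) * ∫ s in Set.Ioi t, g (s - t) := integral_const_mul _ _
      _ = Real.exp (-δ * t) * I := by rw [shift_integral g t]
  -- combine
  have hE : (0:ℝ) < Real.exp (-c * t) := Real.exp_pos _
  have hC1 : (1:ℝ) ≤ C := by
    have : (0:ℝ) ≤ 2 * |k0| / c₀ := by positivity
    rw [hCdef]; linarith
  have hte : t * Real.exp (-c * t) ≤ 2 / c₀ := by
    have hEE : Real.exp (c * t) ≥ c * t + 1 := by linarith [Real.add_one_le_exp (c * t)]
    have hEpos : (0:ℝ) < Real.exp (c * t) := Real.exp_pos _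
    have hrw : -c * t = -(c * t) := by ring
    rw [hrw, Real.exp_neg, ← div_eq_mul_inv, div_le_iff₀ hEpos]
    have hcc : 2 / c₀ * c = 1 := by rw [hcdef]; field_simp
    nlinarith [mul_le_mul_of_nonneg_left hEE (by positivity : (0:ℝ) ≤ 2 / c₀)]
  have h_a : M ^ p * k0 * Real.exp (-c₀ * t) * t ≤ C * Real.exp (-c * t) * M ^ p := by
    have hEE : Real.exp (-c₀ * t) = Real.exp (-c * t) * Real.exp (-c * t) := by
      rw [← Real.exp_add]; congr 1; rw [hcdef]; ring
    have hCk : 2 * k0 / c₀ ≤ C := by rw [hCdef, habs]; linarith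
    calc M ^ p * k0 * Real.exp (-c₀ * t) * t
        = (M ^ p * k0 * Real.exp (-c * t)) * (t * Real.exp (-c * t)) := by rw [hEE]; ring
      _ ≤ (M ^ p * k0 * Real.exp (-c * t)) * (2 / c₀) :=
          mul_le_mul_of_nonneg_left hte (by positivity)
      _ = (2 * k0 / c₀) * Real.exp (-c * t) * M ^ p := by ring
      _ ≤ C * Real.exp (-c * t) * M ^ p :=
          mul_le_mul_of_nonneg_right (mul_le_mul_of_nonneg_right hCk hE.le) hMp
  have h_b : Real.exp (-δ * t) * I ≤ C * Real.exp (-c * t) * I := by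
    have h1 : Real.exp (-δ * t) ≤ Real.exp (-c * t) := by
      apply Real.exp_le_exp.2
      have h2 : c₀ ≤ δ := min_le_right _ _
      nlinarith
    calc Real.exp (-δ * t) * I ≤ Real.exp (-c * t) * I := mul_le_mul_of_nonneg_right h1 hI0
      _ ≤ C * (Real.exp (-c * t) * I) := le_mul_of_one_le_left (by positivity) hC1
      _ = C * Real.exp (-c * t) * I := (mul_assoc _ _ _).symm
  calc (∫ s in Set.Ioi (0:ℝ), ‖η t s‖ ^ p * K s)
      = (∫ s in Set.Ioc (0:ℝ) t, ‖η t s‖ ^ p * K s) + ∫ s in Set.Ioi t, ‖η t s‖ ^ p * K s := hsum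
    _ ≤ M ^ p * k0 * Real.exp (-c₀ * t) * t + Real.exp (-δ * t) * I := add_le_add hb1 hb2
    _ ≤ C * Real.exp (-c * t) * M ^ p + C * Real.exp (-c * t) * I := add_le_add h_a h_b
    _ = C * Real.exp (-c * t) * (I + M ^ p) := by ring
end

section
/- Let d ≥ 1, let H ∈ C¹(ℝ^d;ℝ^d) satisfy |∇H(z)| ≤ a_H(|z|^{p₁} + 1) for all z ∈ ℝ^d, where a_H > 0 and p₁ ≥ 0, let K : [0,∞) → [0,∞) be integrable with ∫₀^∞ K(s) ds = k > 0, and let p > max{2p₁, p₁ + 1}, with conjugate exponent p* = p/(p−1). For measurable η : [0,∞) → ℝ^d write ‖η‖_p = (∫₀^∞ |η(s)|^p K(s) ds)^{1/p}. Then there exists a constant C > 0, depending only on a_H, k, p₁ and p, such that for all x, u ∈ ℝ^d and all measurable η, ζ : [0,∞) → ℝ^d with ‖η‖_p, ‖ζ‖_p < ∞: |∫₀^∞ ∇H(x − η(s))·(u − ζ(s))·K(s) ds|² ≤ C·|u|²·( |x|^{2p₁} + ‖η‖_p^p + 1 ) + C·‖ζ‖_p²·( |x|^{2p₁} + ‖η‖_p^{2p/p*}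 + 1 ). -/
open MeasureTheory Set Real
set_option maxHeartbeats 1000000

lemma aux_rpow_le_rpow_add_one {t a b : ℝ} (ht : 0 ≤ t) (ha : 0 ≤ a) (hab : a ≤ b) :
    t ^ a ≤ t ^ b + 1 := by
  rcases le_total t 1 with h | h
  · have : t ^ a ≤ 1 := Real.rpow_le_one ht h ha
    have : (0:ℝ) ≤ t ^ b := Real.rpow_nonneg ht b
    linarith [Real.rpow_le_one ht ‹t ≤ 1› ha]
  · have := Real.rpow_le_rpow_of_exponent_le h hab
    nlinarith [Real.rpow_nonneg ht b]

lemma aux_add_rpow_le {s t a : ℝ} (hs : 0 ≤ s) (ht : 0 ≤ t) (ha : 0 ≤ a) :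
    (s + t) ^ a ≤ 2 ^ a * (s ^ a + t ^ a) := by
  rcases le_total s t with h | h
  · calc (s + t) ^ a ≤ (2 * t) ^ a := by
          apply Real.rpow_le_rpow (by linarith) (by linarith) ha
      _ = 2 ^ a * t ^ a := Real.mul_rpow (by norm_num) ht
      _ ≤ 2 ^ a * (s ^ a + t ^ a) := by
          have := Real.rpow_nonneg hs a
          have h2 : (0:ℝ) ≤ (2:ℝ) ^ a := Real.rpow_nonneg (by norm_num) a
          nlinarith
  · calc (s + t) ^ a ≤ (2 * s) ^ a := by
          apply Real.rpow_le_rpow (by linarith) (by linarith) ha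
      _ = 2 ^ a * s ^ a := Real.mul_rpow (by norm_num) hs
      _ ≤ 2 ^ a * (s ^ a + t ^ a) := by
          have := Real.rpow_nonneg ht a
          have h2 : (0:ℝ) ≤ (2:ℝ) ^ a := Real.rpow_nonneg (by norm_num) a
          nlinarith

lemma aux_add3_rpow_le {s t r a : ℝ} (hs : 0 ≤ s) (ht : 0 ≤ t) (hr : 0 ≤ r) (ha : 0 ≤ a) :
    (s + t + r) ^ a ≤ 4 ^ a * (s ^ a + t ^ a + r ^ a) := by
  have h2 : (0:ℝ) ≤ (2:ℝ) ^ a := Real.rpow_nonneg (by norm_num) a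
  have h24 : (2:ℝ) ^ a * 2 ^ a = 4 ^ a := by
    rw [← Real.mul_rpow (by norm_num) (by norm_num)]; norm_num
  have h1 : (s + t + r) ^ a ≤ 2 ^ a * ((s + t) ^ a + r ^ a) :=
    aux_add_rpow_le (by linarith) hr ha
  have h2' : (s + t) ^ a ≤ 2 ^ a * (s ^ a + t ^ a) := aux_add_rpow_le hs ht ha
  have h2le4 : (2:ℝ) ^ a ≤ 4 ^ a := Real.rpow_le_rpow (by norm_num) (by norm_num) ha
  have hsa := Real.rpow_nonneg hs a
  have hta := Real.rpow_nonneg ht a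
  have hra := Real.rpow_nonneg hr a
  nlinarith

lemma aux_mul_le_rpow_add_rpow {A B p : ℝ} (hA : 0 ≤ A) (hB : 0 ≤ B) (hp : 1 < p) :
    A * B ≤ A ^ (p / (p - 1)) + B ^ p := by
  have hq : (p / (p-1)).HolderConjugate p := by
    exact (Real.HolderConjugate.conjExponent hp).symm
  have := Real.young_inequality_of_nonneg hA hB hq
  have h1 : A ^ (p/(p-1)) / (p/(p-1)) ≤ A ^ (p/(p-1)) := by
    apply div_le_self (Real.rpow_nonneg hA _)
    rw [le_div_iff₀ (by linarith)]; linarith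
  have h2 : B ^ p / p ≤ B ^ p := by
    apply div_le_self (Real.rpow_nonneg hB _); linarith
  linarith

lemma aux_real_holder {α : Type*} [MeasurableSpace α] {μ : Measure α} {f g : α → ℝ} {a b : ℝ}
    (ha : 0 ≤ a) (hb : 0 ≤ b) (hab : a + b = 1)
    (hf0 : 0 ≤ᵐ[μ] f) (hg0 : 0 ≤ᵐ[μ] g)
    (hfi : Integrable f μ) (hgi : Integrable g μ) :
    ∫ x, f x ^ a * g x ^ b ∂μ ≤ (∫ x, f x ∂μ) ^ a * (∫ x, g x ∂μ) ^ b := by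
  have hfm : AEMeasurable f μ := hfi.aemeasurable
  have hgm : AEMeasurable g μ := hgi.aemeasurable
  have hm : AEMeasurable (fun x => f x ^ a * g x ^ b) μ :=
    (hfm.pow aemeasurable_const).mul (hgm.pow aemeasurable_const)
  have h0 : 0 ≤ᵐ[μ] fun x => f x ^ a * g x ^ b := by
    filter_upwards [hf0, hg0] with x hfx hgx
    exact mul_nonneg (Real.rpow_nonneg hfx a) (Real.rpow_nonneg hgx b)
  have hint : Integrable (fun x => f x ^ a * g x ^ b) μ := by
    refine Integrable.mono' ((hfi.const_mul a).add (hgi.const_mul b))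
      hm.aestronglyMeasurable ?_
    filter_upwards [hf0, hg0] with x hfx hgx
    rw [Real.norm_of_nonneg (mul_nonneg (Real.rpow_nonneg hfx a) (Real.rpow_nonneg hgx b))]
    exact Real.geom_mean_le_arith_mean2_weighted ha hb hfx hgx hab
  have hIf : 0 ≤ ∫ x, f x ∂μ := integral_nonneg_of_ae hf0
  have hIg : 0 ≤ ∫ x, g x ∂μ := integral_nonneg_of_ae hg0
  rw [← ENNReal.ofReal_le_ofReal_iff
    (mul_nonneg (Real.rpow_nonneg hIf a) (Real.rpow_nonneg hIg b))]
  calc ENNReal.ofReal (∫ x, f x ^ a * g x ^ b ∂μ)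
      = ∫⁻ x, ENNReal.ofReal (f x ^ a * g x ^ b) ∂μ :=
        ofReal_integral_eq_lintegral_ofReal hint h0
    _ = ∫⁻ x, ENNReal.ofReal (f x) ^ a * ENNReal.ofReal (g x) ^ b ∂μ := by
        refine lintegral_congr_ae ?_
        filter_upwards [hf0, hg0] with x hfx hgx
        rw [ENNReal.ofReal_mul (Real.rpow_nonneg hfx a),
          ENNReal.ofReal_rpow_of_nonneg hfx ha, ENNReal.ofReal_rpow_of_nonneg hgx hb]
    _ ≤ (∫⁻ x, ENNReal.ofReal (f x) ∂μ) ^ a * (∫⁻ x, ENNReal.ofReal (g x) ∂μ) ^ b :=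
        ENNReal.lintegral_mul_norm_pow_le hfm.ennreal_ofReal hgm.ennreal_ofReal ha hb hab
    _ = ENNReal.ofReal (∫ x, f x ∂μ) ^ a * ENNReal.ofReal (∫ x, g x ∂μ) ^ b := by
        rw [ofReal_integral_eq_lintegral_ofReal hfi hf0,
          ofReal_integral_eq_lintegral_ofReal hgi hg0]
    _ = ENNReal.ofReal ((∫ x, f x ∂μ) ^ a * (∫ x, g x ∂μ) ^ b) := by
        rw [ENNReal.ofReal_mul (Real.rpow_nonneg hIf a),
          ENNReal.ofReal_rpow_of_nonneg hIf ha, ENNReal.ofReal_rpow_of_nonneg hIg hb]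

lemma aux_weight_pow {α : Type*} [MeasurableSpace α] {μ : Measure α} {φ K : α → ℝ} {r p : ℝ}
    (hr : 0 ≤ r) (hrp : r ≤ p) (hp : 0 < p)
    (hφ : ∀ x, 0 ≤ φ x) (hK : 0 ≤ᵐ[μ] K)
    (hKi : Integrable K μ) (hφi : Integrable (fun x => φ x ^ p * K x) μ) :
    ∫ x, φ x ^ r * K x ∂μ ≤
      (∫ x, φ x ^ p * K x ∂μ) ^ (r / p) * (∫ x, K x ∂μ) ^ (1 - r / p) := by
  rcases eq_or_lt_of_le hr with hr0 | hr0
  · simp only [← hr0, Real.rpow_zero, one_mul, zero_div, sub_zero, Real.rpow_one, le_refl]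
  rcases eq_or_lt_of_le hrp with hrp0 | hrp0
  · subst hrp0
    rw [div_self hp.ne', Real.rpow_one, sub_self, Real.rpow_zero, mul_one]
  have ha : 0 < r / p := div_pos hr0 hp
  have hb : 0 < 1 - r / p := by
    rw [sub_pos, div_lt_one hp]; exact hrp0
  have hf0 : 0 ≤ᵐ[μ] fun x => φ x ^ p * K x := by
    filter_upwards [hK] with x hKx
    exact mul_nonneg (Real.rpow_nonneg (hφ x) p) hKx
  have key := aux_real_holder ha.le hb.le (by ring) hf0 hK hφi hKi
  refine le_trans (le_of_eq ?_) key
  refine integral_congr_ae ?_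
  filter_upwards [hK] with x hKx
  rcases eq_or_lt_of_le hKx with hK0 | hK0
  · simp [← hK0, Real.zero_rpow ha.ne', Real.zero_rpow hb.ne']
  · rw [Real.mul_rpow (Real.rpow_nonneg (hφ x) p) hK0.le,
      ← Real.rpow_mul (hφ x), mul_assoc, ← Real.rpow_add hK0,
      show p * (r / p) = r from by field_simp,
      show r / p + (1 - r / p) = 1 from by ring, Real.rpow_one]

lemma aux_weight_holder_two {α : Type*} [MeasurableSpace α] {μ : Measure α} {F G K : α → ℝ}
    {p : ℝ} (hp : 1 < p)
    (hF : ∀ x, 0 ≤ F x) (hG : ∀ x, 0 ≤ G x) (hK : 0 ≤ᵐ[μ] K)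
    (hFi : Integrable (fun x => F x ^ (p / (p - 1)) * K x) μ)
    (hGi : Integrable (fun x => G x ^ p * K x) μ) :
    ∫ x, F x * G x * K x ∂μ ≤
      (∫ x, F x ^ (p / (p - 1)) * K x ∂μ) ^ ((p - 1) / p) *
        (∫ x, G x ^ p * K x ∂μ) ^ (1 / p) := by
  have h1 : (0:ℝ) < (p - 1) / p := div_pos (by linarith) (by linarith)
  have h2 : (0:ℝ) < 1 / p := by positivity
  have hF0 : 0 ≤ᵐ[μ] fun x => F x ^ (p / (p - 1)) * K x := by
    filter_upwards [hK] with x hKx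
    exact mul_nonneg (Real.rpow_nonneg (hF x) _) hKx
  have hG0 : 0 ≤ᵐ[μ] fun x => G x ^ p * K x := by
    filter_upwards [hK] with x hKx
    exact mul_nonneg (Real.rpow_nonneg (hG x) _) hKx
  have key := aux_real_holder h1.le h2.le (by field_simp; ring) hF0 hG0 hFi hGi
  refine le_trans (le_of_eq ?_) key
  refine integral_congr_ae ?_
  filter_upwards [hK] with x hKx
  rcases eq_or_lt_of_le hKx with hK0 | hK0
  · simp [← hK0, Real.zero_rpow h1.ne', Real.zero_rpow h2.ne']
  · rw [Real.mul_rpow (Real.rpow_nonneg (hF x) _) hK0.le,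
      Real.mul_rpow (Real.rpow_nonneg (hG x) _) hK0.le,
      ← Real.rpow_mul (hF x), ← Real.rpow_mul (hG x)]
    rw [div_mul_div_comm, mul_comm p (p-1), mul_div_mul_left _ _ (by linarith : p - 1 ≠ 0),
      div_self (by linarith : p ≠ 0), Real.rpow_one, mul_one_div, div_self (by linarith : p ≠ 0),
      Real.rpow_one]
    rw [mul_mul_mul_comm, ← Real.rpow_add hK0]
    rw [show (p-1)/p + 1/p = 1 by field_simp; ring, Real.rpow_one]


/-- Quadratic bound on the linearized pilot-wave force (estimate (4.13) of the
paper): with `‖∇H(z)‖ ≤ a_H(|z|^{p₁}+1)`, `∫₀^∞ K = k` and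
`p > max{2p₁, p₁+1}` (conjugate exponent `p* = p/(p−1)`),
`|∫₀^∞ ∇H(x−η(s))(u−ζ(s)) K(s) ds|² ≤ C|u|²(|x|^{2p₁} + ‖η‖_p^p + 1)
  + C‖ζ‖_p²(|x|^{2p₁} + ‖η‖_p^{2p/p*} + 1)`,
with `C` depending only on `a_H, k, p₁, p`.  Here
`‖η‖_p^p = ∫₀^∞ |η(s)|^p K(s) ds`, so `‖ζ‖_p² = (∫‖ζ‖^p K)^{2/p}` and
`‖η‖_p^{2p/p*} = (∫‖η‖^p K)^{2(p−1)/p}`. -/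
theorem linearized_pilot_wave_force_bound (aH p₁ p k : ℝ) (haH : 0 < aH)
    (hp₁ : 0 ≤ p₁) (hk : 0 < k) (hp : max (2 * p₁) (p₁ + 1) < p) :
    ∃ C > (0:ℝ), ∀ (d : ℕ), 1 ≤ d →
      ∀ H : EuclideanSpace ℝ (Fin d) → EuclideanSpace ℝ (Fin d), ContDiff ℝ 1 H →
        (∀ z, ‖fderiv ℝ H z‖ ≤ aH * (‖z‖ ^ p₁ + 1)) →
      ∀ K : ℝ → ℝ, (∀ s ≥ (0:ℝ), 0 ≤ K s) → IntegrableOn K (Set.Ioi 0) →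
        (∫ s in Set.Ioi (0:ℝ), K s) = k →
      ∀ (x u : EuclideanSpace ℝ (Fin d)) (η ζ : ℝ → EuclideanSpace ℝ (Fin d)),
        Measurable η → Measurable ζ →
        IntegrableOn (fun s => ‖η s‖ ^ p * K s) (Set.Ioi 0) →
        IntegrableOn (fun s => ‖ζ s‖ ^ p * K s) (Set.Ioi 0) →
        ‖∫ s in Set.Ioi (0:ℝ), K s • (fderiv ℝ H (x - η s)) (u - ζ s)‖ ^ 2 ≤
          C * ‖u‖ ^ 2 *
            (‖x‖ ^ (2 * p₁) + (∫ s in Set.Ioi (0:ℝ), ‖η s‖ ^ p * K s) + 1)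
          + C * (∫ s in Set.Ioi (0:ℝ), ‖ζ s‖ ^ p * K s) ^ (2 / p) *
            (‖x‖ ^ (2 * p₁)
              + (∫ s in Set.Ioi (0:ℝ), ‖η s‖ ^ p * K s) ^ (2 * (p - 1) / p) + 1) := by
  -- basic exponent facts
  have hp1p : 1 < p := lt_of_le_of_lt (by simp [hp₁] : (1:ℝ) ≤ max (2*p₁) (p₁+1)) hp
  have hpp₁ : p₁ + 1 < p := lt_of_le_of_lt (le_max_right _ _) hp
  have h2p₁ : 2 * p₁ < p := lt_of_le_of_lt (le_max_left _ _) hp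
  have hp0 : 0 < p := by linarith
  set q : ℝ := p / (p - 1) with hq_def
  have hq1 : 1 < q := by
    rw [hq_def, lt_div_iff₀ (by linarith)]; linarith
  have hq0 : 0 < q := by linarith
  set m : ℝ := p₁ * q with hm_def
  have hm0 : 0 ≤ m := mul_nonneg hp₁ hq0.le
  have hmp : m ≤ p := by
    rw [hm_def, hq_def, mul_div_assoc']
    rw [div_le_iff₀ (by linarith : (0:ℝ) < p - 1)]
    nlinarith
  set D : ℝ := 2 ^ q * 2 ^ m with hD_def
  have hD0 : 0 < D := mul_pos (Real.rpow_pos_of_pos two_pos q) (Real.rpow_pos_of_pos two_pos m)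
  set b₂ : ℝ := D * (2 * k + k ^ (1 - m / p)) with hb₂_def
  have hb₂0 : 0 < b₂ := by
    have := Real.rpow_pos_of_pos hk (1 - m / p)
    have := hD0
    nlinarith
  set c₄ : ℝ := b₂ ^ (2 / q) * 4 ^ (2 / q) with hc₄_def
  have hc₄0 : 0 < c₄ :=
    mul_pos (Real.rpow_pos_of_pos hb₂0 _) (Real.rpow_pos_of_pos (by norm_num) _)
  refine ⟨4 * aH ^ 2 * c₄ * (k ^ (2 / p) + 1), by positivity, ?_⟩
  set C : ℝ := 4 * aH ^ 2 * c₄ * (k ^ (2 / p) + 1) with hC_def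
  intro d hd H hH hHgrad K hKpos hKint hKk x u η ζ hη hζ hEint hZint
  set μ := volume.restrict (Set.Ioi (0:ℝ)) with hμ_def
  have hK0 : 0 ≤ᵐ[μ] K :=
    ae_restrict_of_forall_mem measurableSet_Ioi (fun s hs => hKpos s (le_of_lt hs))
  have hKam : AEMeasurable K μ := hKint.aemeasurable
  set E := ∫ s in Set.Ioi (0:ℝ), ‖η s‖ ^ p * K s with hE_def
  set Z := ∫ s in Set.Ioi (0:ℝ), ‖ζ s‖ ^ p * K s with hZ_def
  have hE0 : 0 ≤ E := by
    rw [hE_def]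
    refine integral_nonneg_of_ae ?_
    filter_upwards [hK0] with s hKs
    exact mul_nonneg (Real.rpow_nonneg (norm_nonneg _) _) hKs
  have hZ0 : 0 ≤ Z := by
    rw [hZ_def]
    refine integral_nonneg_of_ae ?_
    filter_upwards [hK0] with s hKs
    exact mul_nonneg (Real.rpow_nonneg (norm_nonneg _) _) hKs
  set ψ : ℝ → ℝ := fun s => ‖x - η s‖ ^ p₁ + 1 with hψ_def
  have hψ0 : ∀ s, 0 ≤ ψ s := fun s => by
    have := Real.rpow_nonneg (norm_nonneg (x - η s)) p₁
    simp only [hψ_def]; linarith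
  have hψ1 : ∀ s, 1 ≤ ψ s := fun s => by
    have := Real.rpow_nonneg (norm_nonneg (x - η s)) p₁
    simp only [hψ_def]; linarith
  have hψm : Measurable ψ :=
    ((measurable_const.sub hη).norm.pow measurable_const).add measurable_const
  -- pointwise bound on ψ^q
  have hψq : ∀ s, ψ s ^ q ≤ D * (‖x‖ ^ m + ‖η s‖ ^ m + 1) := by
    intro s
    have h2m : (1:ℝ) ≤ 2 ^ m := by
      have := Real.rpow_le_rpow (le_refl (0:ℝ) |>.trans zero_le_one) one_le_two hm0
      simpa [Real.one_rpow] using this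
    have h2q : (0:ℝ) < 2 ^ q := Real.rpow_pos_of_pos two_pos q
    have h1 : ψ s ^ q ≤ 2 ^ q * ((‖x - η s‖ ^ p₁) ^ q + 1 ^ q) :=
      aux_add_rpow_le (Real.rpow_nonneg (norm_nonneg _) _) zero_le_one hq0.le
    rw [← Real.rpow_mul (norm_nonneg _), ← hm_def, Real.one_rpow] at h1
    have h2 : ‖x - η s‖ ^ m ≤ 2 ^ m * (‖x‖ ^ m + ‖η s‖ ^ m) := by
      calc ‖x - η s‖ ^ m ≤ (‖x‖ + ‖η s‖) ^ m :=
            Real.rpow_le_rpow (norm_nonneg _) (norm_sub_le _ _) hm0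
        _ ≤ 2 ^ m * (‖x‖ ^ m + ‖η s‖ ^ m) :=
            aux_add_rpow_le (norm_nonneg _) (norm_nonneg _) hm0
    have hx0 : (0:ℝ) ≤ ‖x‖ ^ m := Real.rpow_nonneg (norm_nonneg _) _
    have hy0 : (0:ℝ) ≤ ‖η s‖ ^ m := Real.rpow_nonneg (norm_nonneg _) _
    have hD : D = 2 ^ q * 2 ^ m := hD_def
    nlinarith [mul_le_mul_of_nonneg_left h2 h2q.le]
  have hηm_le : ∀ s, ‖η s‖ ^ m ≤ ‖η s‖ ^ p + 1 := fun s =>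
    aux_rpow_le_rpow_add_one (norm_nonneg _) hm0 hmp
  -- integrability facts
  have iψq : Integrable (fun s => ψ s ^ q * K s) μ := by
    refine Integrable.mono'
      ((hKint.const_mul (D * (‖x‖ ^ m + 2))).add (hEint.const_mul D))
      (((hψm.pow measurable_const).aemeasurable.mul hKam).aestronglyMeasurable) ?_
    filter_upwards [hK0] with s hKs
    rw [Real.norm_of_nonneg (mul_nonneg (Real.rpow_nonneg (hψ0 s) q) hKs)]
    have h3 : ψ s ^ q ≤ D * (‖x‖ ^ m + 2) + D * (‖η s‖ ^ p) := by
      have := hψq s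
      have := hηm_le s
      nlinarith
    calc ψ s ^ q * K s ≤ (D * (‖x‖ ^ m + 2) + D * (‖η s‖ ^ p)) * K s :=
          mul_le_mul_of_nonneg_right h3 hKs
      _ = D * (‖x‖ ^ m + 2) * K s + D * (‖η s‖ ^ p * K s) := by ring
  have hψ_le_ψq : ∀ s, ψ s ≤ ψ s ^ q := by
    intro s
    have := Real.rpow_le_rpow_of_exponent_le (hψ1 s) hq1.le
    rwa [Real.rpow_one] at this
  have iψ : Integrable (fun s => ψ s * K s) μ := by
    refine Integrable.mono' iψq ((hψm.aemeasurable.mul hKam).aestronglyMeasurable) ?_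
    filter_upwards [hK0] with s hKs
    rw [Real.norm_of_nonneg (mul_nonneg (hψ0 s) hKs)]
    exact mul_le_mul_of_nonneg_right (hψ_le_ψq s) hKs
  have iψζ : Integrable (fun s => ψ s * ‖ζ s‖ * K s) μ := by
    refine Integrable.mono' (iψq.add hZint)
      (((hψm.mul hζ.norm).aemeasurable.mul hKam).aestronglyMeasurable) ?_
    filter_upwards [hK0] with s hKs
    rw [Real.norm_of_nonneg (mul_nonneg (mul_nonneg (hψ0 s) (norm_nonneg _)) hKs)]
    have h4 : ψ s * ‖ζ s‖ ≤ ψ s ^ q + ‖ζ s‖ ^ p := by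
      have := aux_mul_le_rpow_add_rpow (hψ0 s) (norm_nonneg (ζ s)) hp1p
      rwa [← hq_def] at this
    calc ψ s * ‖ζ s‖ * K s ≤ (ψ s ^ q + ‖ζ s‖ ^ p) * K s :=
          mul_le_mul_of_nonneg_right h4 hKs
      _ = ψ s ^ q * K s + ‖ζ s‖ ^ p * K s := by ring
  have iηm : Integrable (fun s => ‖η s‖ ^ m * K s) μ := by
    refine Integrable.mono' (hEint.add hKint)
      (((hη.norm.pow measurable_const).aemeasurable.mul hKam).aestronglyMeasurable) ?_
    filter_upwards [hK0] with s hKs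
    rw [Real.norm_of_nonneg (mul_nonneg (Real.rpow_nonneg (norm_nonneg _) _) hKs)]
    calc ‖η s‖ ^ m * K s ≤ (‖η s‖ ^ p + 1) * K s :=
          mul_le_mul_of_nonneg_right (hηm_le s) hKs
      _ = ‖η s‖ ^ p * K s + K s := by ring
  -- norm bound on the integral
  have hNbound : ‖∫ s in Set.Ioi (0:ℝ), K s • (fderiv ℝ H (x - η s)) (u - ζ s)‖ ≤
      aH * ‖u‖ * (∫ s in Set.Ioi (0:ℝ), ψ s * K s) +
        aH * (∫ s in Set.Ioi (0:ℝ), ψ s * ‖ζ s‖ * K s) := by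
    have hle : ‖∫ s in Set.Ioi (0:ℝ), K s • (fderiv ℝ H (x - η s)) (u - ζ s)‖ ≤
        ∫ s in Set.Ioi (0:ℝ),
          (aH * ‖u‖ * (ψ s * K s) + aH * (ψ s * ‖ζ s‖ * K s)) := by
      refine norm_integral_le_of_norm_le
        ((iψ.const_mul (aH * ‖u‖)).add (iψζ.const_mul aH)) ?_
      filter_upwards [hK0] with s hKs
      have h1 : ‖(fderiv ℝ H (x - η s)) (u - ζ s)‖ ≤ (aH * ψ s) * (‖u‖ + ‖ζ s‖) := by
        calc ‖(fderiv ℝ H (x - η s)) (u - ζ s)‖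
            ≤ ‖fderiv ℝ H (x - η s)‖ * ‖u - ζ s‖ := ContinuousLinearMap.le_opNorm _ _
          _ ≤ (aH * ψ s) * (‖u‖ + ‖ζ s‖) := by
              refine mul_le_mul ?_ (norm_sub_le _ _) (norm_nonneg _) ?_
              · exact hHgrad (x - η s)
              · have := hψ0 s; positivity
      rw [norm_smul, Real.norm_of_nonneg hKs]
      calc K s * ‖(fderiv ℝ H (x - η s)) (u - ζ s)‖
          ≤ K s * ((aH * ψ s) * (‖u‖ + ‖ζ s‖)) :=
            mul_le_mul_of_nonneg_left h1 hKs
        _ = aH * ‖u‖ * (ψ s * K s) + aH * (ψ s * ‖ζ s‖ * K s) := by ring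
    rwa [integral_add (iψ.const_mul _) (iψζ.const_mul aH), integral_const_mul,
      integral_const_mul] at hle
  -- Hölder estimates
  set S2 := ∫ s in Set.Ioi (0:ℝ), ψ s ^ q * K s with hS2_def
  have hS2nonneg : 0 ≤ S2 := by
    rw [hS2_def]
    refine integral_nonneg_of_ae ?_
    filter_upwards [hK0] with s hKs
    exact mul_nonneg (Real.rpow_nonneg (hψ0 s) _) hKs
  have hoq : 1 - 1 / q = 1 / p := by
    rw [hq_def]; field_simp; ring
  have hIψ : (∫ s in Set.Ioi (0:ℝ), ψ s * K s) ≤ S2 ^ (1/q) * k ^ (1/p) := by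
    have h := aux_weight_pow (μ := μ) (φ := ψ) (K := K) zero_le_one hq1.le hq0
      hψ0 hK0 hKint iψq
    simp only [Real.rpow_one] at h
    rw [hKk, hoq] at h
    exact h
  have hIψζ : (∫ s in Set.Ioi (0:ℝ), ψ s * ‖ζ s‖ * K s) ≤ S2 ^ (1/q) * Z ^ (1/p) := by
    have h := aux_weight_holder_two (μ := μ) (F := ψ) (G := fun s => ‖ζ s‖) (K := K)
      hp1p hψ0 (fun s => norm_nonneg _) hK0 iψq hZint
    rw [← hq_def] at h
    have hpq : (p - 1) / p = 1 / q := by rw [hq_def]; field_simp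
    rw [hpq] at h
    exact h
  have hIM : (∫ s in Set.Ioi (0:ℝ), ‖η s‖ ^ m * K s) ≤ E ^ (m/p) * k ^ (1 - m/p) := by
    have h := aux_weight_pow (μ := μ) (φ := fun s => ‖η s‖) (K := K) hm0 hmp hp0
      (fun s => norm_nonneg _) hK0 hKint hEint
    rwa [hKk] at h
  -- bound on S2
  have hqne : q ≠ 0 := hq0.ne'
  have hS2le : S2 ≤ b₂ * (‖x‖ ^ m + E ^ (m/p) + 1) := by
    have step1 : S2 ≤ ∫ s in Set.Ioi (0:ℝ),
        (D * ((‖x‖ ^ m + 1) * K s) + D * (‖η s‖ ^ m * K s)) := by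
      rw [hS2_def]
      refine integral_mono_ae iψq
        (((hKint.const_mul (‖x‖ ^ m + 1)).const_mul D).add (iηm.const_mul D)) ?_
      filter_upwards [hK0] with s hKs
      calc ψ s ^ q * K s ≤ (D * (‖x‖ ^ m + ‖η s‖ ^ m + 1)) * K s :=
            mul_le_mul_of_nonneg_right (hψq s) hKs
        _ = D * ((‖x‖ ^ m + 1) * K s) + D * (‖η s‖ ^ m * K s) := by ring
    rw [integral_add ((hKint.const_mul _).const_mul D) (iηm.const_mul D),
      integral_const_mul, integral_const_mul, integral_const_mul, hKk] at step1
    have hkp : 0 < k ^ (1 - m/p) := Real.rpow_pos_of_pos hk _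
    have hxm : 0 ≤ ‖x‖ ^ m := Real.rpow_nonneg (norm_nonneg _) _
    have hEmp : 0 ≤ E ^ (m/p) := Real.rpow_nonneg hE0 _
    have h5 : (‖x‖ ^ m + 1) * k + E ^ (m/p) * k ^ (1 - m/p) ≤
        (2 * k + k ^ (1 - m/p)) * (‖x‖ ^ m + E ^ (m/p) + 1) := by
      nlinarith only [mul_nonneg hk.le hxm, mul_nonneg hk.le hEmp,
        mul_nonneg hkp.le hxm, mul_nonneg hkp.le hEmp, hk.le, hkp.le]
    have h6 : S2 ≤ D * ((‖x‖ ^ m + 1) * k + E ^ (m/p) * k ^ (1 - m/p)) := by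
      have := mul_le_mul_of_nonneg_left hIM hD0.le
      linarith [step1, this]
    calc S2 ≤ D * ((‖x‖ ^ m + 1) * k + E ^ (m/p) * k ^ (1 - m/p)) := h6
      _ ≤ D * ((2 * k + k ^ (1 - m/p)) * (‖x‖ ^ m + E ^ (m/p) + 1)) :=
          mul_le_mul_of_nonneg_left h5 hD0.le
      _ = b₂ * (‖x‖ ^ m + E ^ (m/p) + 1) := by rw [hb₂_def]; ring
  have hS2pow : S2 ^ (2/q) ≤ c₄ * (‖x‖ ^ (2*p₁) + E ^ (2*p₁/p) + 1) := by
    have h2q0 : (0:ℝ) ≤ 2/q := by positivity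
    calc S2 ^ (2/q) ≤ (b₂ * (‖x‖ ^ m + E ^ (m/p) + 1)) ^ (2/q) :=
          Real.rpow_le_rpow hS2nonneg hS2le h2q0
      _ = b₂ ^ (2/q) * (‖x‖ ^ m + E ^ (m/p) + 1) ^ (2/q) := by
          refine Real.mul_rpow hb₂0.le ?_
          have := Real.rpow_nonneg (norm_nonneg x) m
          have := Real.rpow_nonneg hE0 (m/p)
          linarith
      _ ≤ b₂ ^ (2/q) * (4 ^ (2/q) * ((‖x‖ ^ m) ^ (2/q) + (E ^ (m/p)) ^ (2/q) + 1 ^ (2/q))) := by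
          refine mul_le_mul_of_nonneg_left ?_ (Real.rpow_nonneg hb₂0.le _)
          exact aux_add3_rpow_le (Real.rpow_nonneg (norm_nonneg _) _)
            (Real.rpow_nonneg hE0 _) zero_le_one h2q0
      _ = c₄ * (‖x‖ ^ (2*p₁) + E ^ (2*p₁/p) + 1) := by
          rw [← Real.rpow_mul (norm_nonneg x), ← Real.rpow_mul hE0, Real.one_rpow,
            show m * (2/q) = 2*p₁ from by rw [hm_def]; field_simp,
            show (m/p) * (2/q) = 2*p₁/p from by rw [hm_def]; field_simp,
            hc₄_def]
          ring
  -- squares of rpowers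
  have aux_sq : ∀ t : ℝ, 0 ≤ t → ∀ a : ℝ, (t ^ a) ^ (2:ℕ) = t ^ (a*2) := by
    intro t ht a
    rw [← Real.rpow_natCast (t ^ a) 2, ← Real.rpow_mul ht]
    norm_num
  have e1 : (S2 ^ (1/q)) ^ (2:ℕ) = S2 ^ (2/q) := by
    rw [aux_sq _ hS2nonneg, show (1/q)*2 = 2/q from by ring]
  have e2 : (k ^ (1/p)) ^ (2:ℕ) = k ^ (2/p) := by
    rw [aux_sq _ hk.le, show (1/p)*2 = 2/p from by ring]
  have e3 : (Z ^ (1/p)) ^ (2:ℕ) = Z ^ (2/p) := by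
    rw [aux_sq _ hZ0, show (1/p)*2 = 2/p from by ring]
  -- squaring the norm bound
  have hsq : ‖∫ s in Set.Ioi (0:ℝ), K s • (fderiv ℝ H (x - η s)) (u - ζ s)‖ ^ 2 ≤
      (aH * ‖u‖ * (S2 ^ (1/q) * k ^ (1/p)) + aH * (S2 ^ (1/q) * Z ^ (1/p))) ^ 2 := by
    refine pow_le_pow_left₀ (norm_nonneg _) ?_ 2
    refine le_trans hNbound (add_le_add ?_ ?_)
    · exact mul_le_mul_of_nonneg_left hIψ (by positivity)
    · exact mul_le_mul_of_nonneg_left hIψζ haH.le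
  have hexp : (aH * ‖u‖ * (S2 ^ (1/q) * k ^ (1/p)) + aH * (S2 ^ (1/q) * Z ^ (1/p))) ^ 2 ≤
      2*aH^2 * k^(2/p) * ‖u‖^2 * S2^(2/q) + 2*aH^2 * S2^(2/q) * Z^(2/p) := by
    have hA : (aH * ‖u‖ * (S2 ^ (1/q) * k ^ (1/p))) ^ 2 =
        aH^2 * k^(2/p) * ‖u‖^2 * S2^(2/q) := by
      rw [mul_pow, mul_pow, mul_pow, e1, e2]; ring
    have hB : (aH * (S2 ^ (1/q) * Z ^ (1/p))) ^ 2 = aH^2 * S2^(2/q) * Z^(2/p) := by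
      rw [mul_pow, mul_pow, e1, e3]; ring
    nlinarith only [sq_nonneg (aH * ‖u‖ * (S2 ^ (1/q) * k ^ (1/p)) - aH * (S2 ^ (1/q) * Z ^ (1/p))), hA, hB]
  -- final assembly
  have hX20 : 0 ≤ ‖x‖ ^ (2*p₁) := Real.rpow_nonneg (norm_nonneg _) _
  have hEa : E ^ (2*p₁/p) ≤ E + 1 := by
    have h := aux_rpow_le_rpow_add_one hE0 (by positivity)
      (show 2*p₁/p ≤ 1 by rw [div_le_one hp0]; linarith)
    rwa [Real.rpow_one] at h
  have hEb : E ^ (2*p₁/p) ≤ E ^ (2*(p-1)/p) + 1 :=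
    aux_rpow_le_rpow_add_one hE0 (by positivity)
      ((div_le_div_iff_of_pos_right hp0).2 (by linarith))
  have hV0 : 0 ≤ Z ^ (2/p) := Real.rpow_nonneg hZ0 _
  have hW0 : 0 ≤ ‖u‖ ^ 2 := sq_nonneg _
  have hB10 : 0 ≤ ‖x‖ ^ (2*p₁) + E + 1 := by linarith
  have hB20 : 0 ≤ ‖x‖ ^ (2*p₁) + E ^ (2*(p-1)/p) + 1 := by
    have := Real.rpow_nonneg hE0 (2*(p-1)/p); linarith
  have hbr1 : c₄ * (‖x‖ ^ (2*p₁) + E ^ (2*p₁/p) + 1) ≤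
      2 * c₄ * (‖x‖ ^ (2*p₁) + E + 1) := by
    linarith only [mul_le_mul_of_nonneg_left hEa hc₄0.le,
      mul_nonneg hc₄0.le (add_nonneg hX20 hE0)]
  have hbr2 : c₄ * (‖x‖ ^ (2*p₁) + E ^ (2*p₁/p) + 1) ≤
      2 * c₄ * (‖x‖ ^ (2*p₁) + E ^ (2*(p-1)/p) + 1) := by
    linarith only [mul_le_mul_of_nonneg_left hEb hc₄0.le,
      mul_nonneg hc₄0.le (add_nonneg hX20 (Real.rpow_nonneg hE0 (2*(p-1)/p)))]
  have hcoef1 : 4 * aH^2 * k^(2/p) * c₄ ≤ C := by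
    rw [hC_def]
    have h40 : (0:ℝ) < 4 * aH^2 * c₄ := by positivity
    have hkey : 4 * aH^2 * c₄ * (k^(2/p) + 1) - 4 * aH^2 * k^(2/p) * c₄ =
        4 * aH^2 * c₄ := by ring
    linarith
  have hcoef2 : 4 * aH^2 * c₄ ≤ C := by
    rw [hC_def]
    have h41 : (0:ℝ) ≤ 4 * aH^2 * c₄ * k^(2/p) := by positivity
    have hkey : 4 * aH^2 * c₄ * (k^(2/p) + 1) - 4 * aH^2 * c₄ =
        4 * aH^2 * c₄ * k^(2/p) := by ring
    linarith
  have hterm1 : 2*aH^2 * k^(2/p) * ‖u‖^2 * S2^(2/q) ≤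
      C * ‖u‖^2 * (‖x‖ ^ (2*p₁) + E + 1) := by
    have hc0 : (0:ℝ) ≤ 2*aH^2 * k^(2/p) * ‖u‖^2 := by positivity
    calc 2*aH^2 * k^(2/p) * ‖u‖^2 * S2^(2/q)
        ≤ 2*aH^2 * k^(2/p) * ‖u‖^2 * (c₄ * (‖x‖ ^ (2*p₁) + E ^ (2*p₁/p) + 1)) :=
          mul_le_mul_of_nonneg_left hS2pow hc0
      _ ≤ 2*aH^2 * k^(2/p) * ‖u‖^2 * (2 * c₄ * (‖x‖ ^ (2*p₁) + E + 1)) :=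
          mul_le_mul_of_nonneg_left hbr1 hc0
      _ = (4 * aH^2 * k^(2/p) * c₄) * (‖u‖^2 * (‖x‖ ^ (2*p₁) + E + 1)) := by ring
      _ ≤ C * (‖u‖^2 * (‖x‖ ^ (2*p₁) + E + 1)) :=
          mul_le_mul_of_nonneg_right hcoef1 (mul_nonneg hW0 hB10)
      _ = C * ‖u‖^2 * (‖x‖ ^ (2*p₁) + E + 1) := by ring
  have hterm2 : 2*aH^2 * S2^(2/q) * Z^(2/p) ≤
      C * Z^(2/p) * (‖x‖ ^ (2*p₁) + E ^ (2*(p-1)/p) + 1) := by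
    have hc0 : (0:ℝ) ≤ 2*aH^2 := by positivity
    calc 2*aH^2 * S2^(2/q) * Z^(2/p)
        ≤ 2*aH^2 * (c₄ * (‖x‖ ^ (2*p₁) + E ^ (2*p₁/p) + 1)) * Z^(2/p) :=
          mul_le_mul_of_nonneg_right (mul_le_mul_of_nonneg_left hS2pow hc0) hV0
      _ ≤ 2*aH^2 * (2 * c₄ * (‖x‖ ^ (2*p₁) + E ^ (2*(p-1)/p) + 1)) * Z^(2/p) :=
          mul_le_mul_of_nonneg_right (mul_le_mul_of_nonneg_left hbr2 hc0) hV0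
      _ = (4 * aH^2 * c₄) * ((‖x‖ ^ (2*p₁) + E ^ (2*(p-1)/p) + 1) * Z^(2/p)) := by ring
      _ ≤ C * ((‖x‖ ^ (2*p₁) + E ^ (2*(p-1)/p) + 1) * Z^(2/p)) :=
          mul_le_mul_of_nonneg_right hcoef2 (mul_nonneg hB20 hV0)
      _ = C * Z^(2/p) * (‖x‖ ^ (2*p₁) + E ^ (2*(p-1)/p) + 1) := by ring
  calc ‖∫ s in Set.Ioi (0:ℝ), K s • (fderiv ℝ H (x - η s)) (u - ζ s)‖ ^ 2
      ≤ (aH * ‖u‖ * (S2 ^ (1/q) * k ^ (1/p)) + aH * (S2 ^ (1/q) * Z ^ (1/p))) ^ 2 := hsq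
    _ ≤ 2*aH^2 * k^(2/p) * ‖u‖^2 * S2^(2/q) + 2*aH^2 * S2^(2/q) * Z^(2/p) := hexp
    _ ≤ C * ‖u‖^2 * (‖x‖ ^ (2*p₁) + E + 1) +
        C * Z^(2/p) * (‖x‖ ^ (2*p₁) + E ^ (2*(p-1)/p) + 1) := add_le_add hterm1 hterm2
end

section
/- Let E be a real normed vector space, O ⊆ E an open set, and Ψ : O → ℝ a continuous function. Define ϱ(X,Y) = inf ∫₀¹ e^{Ψ(γ(s))/2} ‖γ′(s)‖ ds, where the infimum is over all continuously differentiable paths γ : [0,1] → O with γ(0) = X and γ(1) = Y (and ϱ(X,Y) = ∞ if no such path exists). Let N > 0 and let f : O → ℝ be Fréchet differentiable with |f(X) − f(Y)| ≤ N·ϱ(X,Y) for all X, Y ∈ O. Then the Fréchet derivative satisfies ‖Df(Y)‖ ≤ N·e^{Ψ(Y)/2} for every Y ∈ O, where ‖Df(Y)‖ is the operator norm in the dual of E. -/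
open Set Real intervalIntegral

/-- If `f` is Lipschitz with constant `N` for the weighted path distance
`ϱ(X,Y) = inf_γ ∫₀¹ e^{Ψ(γ(s))/2}‖γ′(s)‖ ds` (the hypothesis below states the
equivalent bound along every `C¹` path in `O`), then `‖Df(Y)‖ ≤ N e^{Ψ(Y)/2}` on
`O` (Proposition 4.6, part 1). -/
theorem gradient_bound_of_path_lipschitz {E : Type*} [NormedAddCommGroup E]
    [NormedSpace ℝ E] (O : Set E) (hO : IsOpen O) (Ψ : E → ℝ)
    (hΨ : ContinuousOn Ψ O) (N : ℝ) (hN : 0 < N) (f : E → ℝ)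
    (hf : ∀ Y ∈ O, DifferentiableAt ℝ f Y)
    (hLip : ∀ X ∈ O, ∀ Y ∈ O, ∀ γ : ℝ → E,
      ContDiffOn ℝ 1 γ (Set.Icc 0 1) → (∀ s ∈ Set.Icc (0:ℝ) 1, γ s ∈ O) →
      γ 0 = X → γ 1 = Y →
      |f X - f Y| ≤
        N * ∫ s in (0:ℝ)..1, Real.exp (Ψ (γ s) / 2) * ‖derivWithin γ (Set.Icc 0 1) s‖) :
    ∀ Y ∈ O, ‖fderiv ℝ f Y‖ ≤ N * Real.exp (Ψ Y / 2) := by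
  intro Y hY
  refine le_of_forall_pos_le_add fun ε hε => ?_
  -- choose a ball around Y on which exp(Ψ/2) ≤ exp(Ψ Y /2) + ε/N
  have hΨc : ContinuousAt Ψ Y := hΨ.continuousAt (hO.mem_nhds hY)
  have hec : ContinuousAt (fun Z => Real.exp (Ψ Z / 2)) Y :=
    Real.continuous_exp.continuousAt.comp (hΨc.div_const 2)
  have h1 : ∀ᶠ Z in nhds Y, Real.exp (Ψ Z / 2) ≤ Real.exp (Ψ Y / 2) + ε / N := by
    have : ∀ᶠ Z in nhds Y, Real.exp (Ψ Z / 2) < Real.exp (Ψ Y / 2) + ε / N :=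
      hec.eventually_lt_const (lt_add_of_pos_right _ (by positivity))
    exact this.mono fun Z hZ => hZ.le
  have h2 : ∀ᶠ Z in nhds Y, Z ∈ O := hO.eventually_mem hY
  obtain ⟨δ, hδpos, hball⟩ := Metric.eventually_nhds_iff_ball.mp (h1.and h2)
  set k : ℝ := N * Real.exp (Ψ Y / 2) + ε with hk
  have hk0 : 0 ≤ k := by positivity
  -- f is k-Lipschitz on the ball
  have hlipOn : LipschitzOnWith k.toNNReal f (Metric.ball Y δ) := by
    refine LipschitzOnWith.of_dist_le_mul fun X hX Z hZ => ?_
    set γ : ℝ → E := fun s => X + s • (Z - X) with hγ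
    have hγ0 : γ 0 = X := by simp [hγ]
    have hγ1 : γ 1 = Z := by simp [hγ]
    have hmem : ∀ s ∈ Set.Icc (0:ℝ) 1, γ s ∈ Metric.ball Y δ := fun s hs =>
      (convex_ball Y δ).add_smul_sub_mem hX hZ hs
    have hmemO : ∀ s ∈ Set.Icc (0:ℝ) 1, γ s ∈ O := fun s hs => (hball _ (hmem s hs)).2
    have hcd : ContDiffOn ℝ 1 γ (Set.Icc 0 1) :=
      (contDiff_const.add (contDiff_id.smul contDiff_const)).contDiffOn
    have hderiv : ∀ s ∈ Set.Icc (0:ℝ) 1, derivWithin γ (Set.Icc 0 1) s = Z - X := by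
      intro s hs
      have h : HasDerivAt γ (Z - X) s := by
        simpa [hγ] using ((hasDerivAt_id s).smul_const (Z - X)).const_add X
      exact h.hasDerivWithinAt.derivWithin (uniqueDiffOn_Icc one_pos s hs)
    have key := hLip X (hball _ hX).2 Z (hball _ hZ).2 γ hcd hmemO hγ0 hγ1
    have hint : (∫ s in (0:ℝ)..1, Real.exp (Ψ (γ s) / 2) * ‖derivWithin γ (Set.Icc 0 1) s‖)
        ≤ (Real.exp (Ψ Y / 2) + ε / N) * ‖Z - X‖ := by
      have heq : (∫ s in (0:ℝ)..1, Real.exp (Ψ (γ s) / 2) * ‖derivWithin γ (Set.Icc 0 1) s‖)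
          = ∫ s in (0:ℝ)..1, Real.exp (Ψ (γ s) / 2) * ‖Z - X‖ := by
        refine intervalIntegral.integral_congr fun s hs => ?_
        rw [Set.uIcc_of_le (zero_le_one)] at hs
        rw [hderiv s hs]
      rw [heq]
      have hInt1 : IntervalIntegrable (fun s => Real.exp (Ψ (γ s) / 2) * ‖Z - X‖)
          MeasureTheory.volume 0 1 := by
        apply ContinuousOn.intervalIntegrable
        rw [Set.uIcc_of_le (zero_le_one)]
        have hγc : ContinuousOn γ (Set.Icc 0 1) := hcd.continuousOn
        exact ((Real.continuous_exp.comp_continuousOn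
          ((hΨ.comp hγc hmemO).div_const 2)).mul continuousOn_const)
      have hmono : (∫ s in (0:ℝ)..1, Real.exp (Ψ (γ s) / 2) * ‖Z - X‖)
          ≤ ∫ _s in (0:ℝ)..1, (Real.exp (Ψ Y / 2) + ε / N) * ‖Z - X‖ := by
        refine intervalIntegral.integral_mono_on zero_le_one hInt1
          intervalIntegrable_const fun s hs => ?_
        exact mul_le_mul_of_nonneg_right (hball _ (hmem s hs)).1 (norm_nonneg _)
      simpa using hmono
    have : |f X - f Z| ≤ k * ‖Z - X‖ := by
      calc |f X - f Z| ≤ N * ((Real.exp (Ψ Y / 2) + ε / N) * ‖Z - X‖) :=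
            key.trans (mul_le_mul_of_nonneg_left hint hN.le)
        _ = k * ‖Z - X‖ := by rw [hk, ← mul_assoc]; congr 1; field_simp
    rw [Real.dist_eq, dist_eq_norm, ← norm_neg (X - Z)]
    simpa [Real.coe_toNNReal k hk0, neg_sub] using this
  have hfd := (hf Y hY).hasFDerivAt
  have := hfd.le_of_lipschitzOn (Metric.ball_mem_nhds Y hδpos) hlipOn
  rwa [Real.coe_toNNReal k hk0] at this
end

section
/- Let α > 0 and define G : ℝ²∖{0} → ℝ by G(x) = −α·log|x|, where |·| is the Euclidean norm. Then for every x ≠ 0 the second Fréchet derivative of G at x has operator norm ‖D²G(x)‖ = α/|x|², and the following are equivalent: (i) there exists a constant a₆ > 0 such that 1 + e^{G(x)}/|x| ≥ a₆·‖D²G(x)‖² for all x ∈ ℝ²∖{0}; (ii) α ≥ 3. -/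
open Set Real

noncomputable section CoulombAux

variable {E : Type*} [NormedAddCommGroup E] [InnerProductSpace ℝ E]

local notation "⟪" x ", " y "⟫" => @inner ℝ _ _ x y

/-- Candidate first derivative of `y ↦ -α log ‖y‖`. -/
def coulombF (α : ℝ) (x : E) : E →L[ℝ] ℝ := (-α * (‖x‖ ^ 2)⁻¹) • innerSL ℝ x

/-- `innerSL` as a plain `ℝ`-linear map. -/
def innerSL₂ : E →L[ℝ] E →L[ℝ] ℝ := innerSL ℝ

@[simp] lemma innerSL₂_apply (u v : E) : innerSL₂ u v = ⟪u, v⟫ := rfl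

/-- Candidate second derivative. -/
def coulombB (α : ℝ) (x : E) : E →L[ℝ] E →L[ℝ] ℝ :=
  (-α * (‖x‖ ^ 2)⁻¹) • (innerSL₂ : E →L[ℝ] E →L[ℝ] ℝ)
    + ((2 * α * ((‖x‖ ^ 2) ^ 2)⁻¹) • innerSL ℝ x).smulRight (innerSL ℝ x)

lemma coulombB_apply (α : ℝ) (x u v : E) :
    coulombB α x u v = -α * (‖x‖ ^ 2)⁻¹ * ⟪u, v⟫
      + 2 * α * ((‖x‖ ^ 2) ^ 2)⁻¹ * ⟪x, u⟫ * ⟪x, v⟫ := by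
  simp only [coulombB, ContinuousLinearMap.smul_apply, ContinuousLinearMap.add_apply,
    ContinuousLinearMap.smulRight_apply, innerSL₂_apply, innerSL_apply_apply, smul_eq_mul]

lemma inner_self_sq (x : E) : (⟪x, x⟫ : ℝ) = ‖x‖ ^ 2 := real_inner_self_eq_norm_sq x

lemma hasFDerivAt_inner_self (x : E) :
    HasFDerivAt (fun y : E => (⟪y, y⟫ : ℝ)) ((2 : ℝ) • innerSL ℝ x) x := by
  have := (hasFDerivAt_id x).inner ℝ (hasFDerivAt_id x)
  refine this.congr_fderiv ?_
  ext v
  simp [fderivInnerCLM_apply, real_inner_comm, two_smul]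

lemma hasFDerivAt_coulombG (α : ℝ) {x : E} (hx : x ≠ 0) :
    HasFDerivAt (fun y : E => -α * Real.log ‖y‖) (coulombF α x) x := by
  have hs := hasFDerivAt_inner_self x
  have hsx : (⟪x, x⟫ : ℝ) ≠ 0 := by
    simpa [inner_self_sq] using pow_ne_zero 2 (norm_ne_zero_iff.2 hx)
  have h2 : HasFDerivAt (fun y : E => (-α / 2) * Real.log ⟪y, y⟫)
      ((-α / 2) • ((⟪x, x⟫)⁻¹ • ((2 : ℝ) • innerSL ℝ x))) x := (hs.log hsx).const_mul _
  have heq : (fun y : E => (-α / 2) * Real.log ⟪y, y⟫)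
      = fun y : E => -α * Real.log ‖y‖ := by
    funext y
    rw [inner_self_sq, Real.log_pow]
    push_cast; ring
  rw [heq] at h2
  convert h2 using 1
  rw [inner_self_sq]
  ext v
  simp [coulombF]
  ring

lemma hasFDerivAt_coulombF (α : ℝ) {x : E} (hx : x ≠ 0) :
    HasFDerivAt (fun y : E => coulombF α y) (coulombB α x) x := by
  have hs := hasFDerivAt_inner_self x
  have hsx : (⟪x, x⟫ : ℝ) ≠ 0 := by
    simpa [inner_self_sq] using pow_ne_zero 2 (norm_ne_zero_iff.2 hx)
  have hinv : HasFDerivAt (fun y : E => (⟪y, y⟫ : ℝ)⁻¹)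
      ((-((⟪x, x⟫ : ℝ) ^ 2)⁻¹) • ((2 : ℝ) • innerSL ℝ x)) x := by
    exact HasDerivAt.comp_hasFDerivAt (h₂ := Inv.inv) (f := fun y : E => (⟪y, y⟫ : ℝ)) x
      (hasDerivAt_inv hsx) hs
  have hc : HasFDerivAt (fun y : E => -α * (⟪y, y⟫ : ℝ)⁻¹)
      ((-α) • ((-((⟪x, x⟫ : ℝ) ^ 2)⁻¹) • ((2 : ℝ) • innerSL ℝ x))) x := hinv.const_mul _
  have hF := hc.smul ((innerSL ℝ (E := E)).hasFDerivAt (x := x))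
  have heq : (fun y : E => (-α * (⟪y, y⟫ : ℝ)⁻¹) • innerSL ℝ y)
      = fun y : E => coulombF α y := by
    funext y; rw [coulombF, inner_self_sq]
  rw [show ((fun y : E => -α * (⟪y, y⟫ : ℝ)⁻¹) • ⇑(innerSL ℝ (E := E))) = fun y : E => coulombF α y from heq] at hF
  refine hF.congr_fderiv ?_
  ext u v
  rw [coulombB_apply]
  simp only [inner_self_sq, innerSL_apply_apply, ContinuousLinearMap.smul_apply,
    ContinuousLinearMap.add_apply, ContinuousLinearMap.smulRight_apply, smul_eq_mul,
    ContinuousLinearMap.coe_smul', Pi.smul_apply]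
  ring_nf
  rfl

/-- key pointwise inequality -/
lemma coulomb_key_ineq {x : E} (hx : x ≠ 0) (u v : E) :
    |⟪u, v⟫ - 2 * (⟪x, u⟫ / ‖x‖) * (⟪x, v⟫ / ‖x‖)| ≤ ‖u‖ * ‖v‖ := by
  have hr : (0 : ℝ) < ‖x‖ := norm_pos_iff.2 hx
  set r : ℝ := ‖x‖ with hrdef
  set a : ℝ := ⟪x, u⟫ / r with ha
  set b : ℝ := ⟪x, v⟫ / r with hb
  set u' : E := u - (a / r) • x with hu'
  set v' : E := v - (b / r) • x with hv'
  have hxx : (⟪x, x⟫ : ℝ) = r ^ 2 := inner_self_sq x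
  have hxu : (⟪x, u⟫ : ℝ) = a * r := by rw [ha, div_mul_cancel₀ _ hr.ne']
  have hxv : (⟪x, v⟫ : ℝ) = b * r := by rw [hb, div_mul_cancel₀ _ hr.ne']
  have hux : (⟪u, x⟫ : ℝ) = a * r := by rw [real_inner_comm]; exact hxu
  have hvx : (⟪v, x⟫ : ℝ) = b * r := by rw [real_inner_comm]; exact hxv
  have h1 : (⟪u', v'⟫ : ℝ) = ⟪u, v⟫ - a * b := by
    simp only [hu', hv', inner_sub_left, inner_sub_right, real_inner_smul_left,
      real_inner_smul_right, hxx, hxu, hxv, hux, hvx]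
    field_simp
    ring
  have h2 : ‖u'‖ ^ 2 = ‖u‖ ^ 2 - a ^ 2 := by
    rw [← inner_self_sq, ← inner_self_sq]
    simp only [hu', inner_sub_left, inner_sub_right, real_inner_smul_left,
      real_inner_smul_right, hxx, hxu, hux]
    field_simp
    ring
  have h3 : ‖v'‖ ^ 2 = ‖v‖ ^ 2 - b ^ 2 := by
    rw [← inner_self_sq, ← inner_self_sq]
    simp only [hv', inner_sub_left, inner_sub_right, real_inner_smul_left,
      real_inner_smul_right, hxx, hxv, hvx]
    field_simp
    ring
  have hCS : |(⟪u', v'⟫ : ℝ)| ≤ ‖u'‖ * ‖v'‖ := abs_real_inner_le_norm u' v'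
  have step1 : |⟪u, v⟫ - 2 * a * b| ≤ ‖u'‖ * ‖v'‖ + |a| * |b| := by
    have : (⟪u, v⟫ : ℝ) - 2 * a * b = ⟪u', v'⟫ - a * b := by rw [h1]; ring
    rw [this]
    calc |(⟪u', v'⟫ : ℝ) - a * b| ≤ |(⟪u', v'⟫ : ℝ)| + |a * b| := abs_sub _ _
      _ ≤ ‖u'‖ * ‖v'‖ + |a| * |b| := by rw [abs_mul]; exact add_le_add hCS le_rfl
  have step2 : ‖u'‖ * ‖v'‖ + |a| * |b| ≤ ‖u‖ * ‖v‖ := by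
    nlinarith [sq_nonneg (‖u'‖ * |b| - ‖v'‖ * |a|), norm_nonneg u', norm_nonneg v',
      abs_nonneg a, abs_nonneg b, sq_abs a, sq_abs b, norm_nonneg u, norm_nonneg v,
      mul_nonneg (norm_nonneg u') (norm_nonneg v'),
      mul_nonneg (abs_nonneg a) (abs_nonneg b),
      mul_nonneg (norm_nonneg u) (norm_nonneg v),
      sq_nonneg (‖u‖ * ‖v‖ - ‖u'‖ * ‖v'‖ - |a| * |b|),
      sq_nonneg (‖u‖ * ‖v‖ + ‖u'‖ * ‖v'‖ + |a| * |b|)]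
  have : 2 * (⟪x, u⟫ / r) * (⟪x, v⟫ / r) = 2 * a * b := by rw [ha, hb]
  rw [this]
  exact step1.trans step2

lemma norm_coulombB {α : ℝ} (hα : 0 < α) {x : E} (hx : x ≠ 0) :
    ‖coulombB α x‖ = α / ‖x‖ ^ 2 := by
  have hr : (0 : ℝ) < ‖x‖ := norm_pos_iff.2 hx
  have hr2 : (0 : ℝ) < ‖x‖ ^ 2 := by positivity
  have hbound : ∀ u v : E, |coulombB α x u v| ≤ α / ‖x‖ ^ 2 * ‖u‖ * ‖v‖ := by
    intro u v
    have hkey := coulomb_key_ineq hx u v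
    have heq : coulombB α x u v
        = -(α / ‖x‖ ^ 2) * (⟪u, v⟫ - 2 * (⟪x, u⟫ / ‖x‖) * (⟪x, v⟫ / ‖x‖)) := by
      rw [coulombB_apply]
      field_simp
      ring
    rw [heq, abs_mul, abs_neg, abs_of_pos (by positivity : (0:ℝ) < α / ‖x‖ ^ 2)]
    calc α / ‖x‖ ^ 2 * |⟪u, v⟫ - 2 * (⟪x, u⟫ / ‖x‖) * (⟪x, v⟫ / ‖x‖)|
        ≤ α / ‖x‖ ^ 2 * (‖u‖ * ‖v‖) := by
          exact mul_le_mul_of_nonneg_left hkey (by positivity)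
      _ = α / ‖x‖ ^ 2 * ‖u‖ * ‖v‖ := by ring
  refine le_antisymm ?_ ?_
  · refine ContinuousLinearMap.opNorm_le_bound _ (by positivity) fun u => ?_
    refine ContinuousLinearMap.opNorm_le_bound _ (by positivity) fun v => ?_
    calc ‖coulombB α x u v‖ = |coulombB α x u v| := rfl
      _ ≤ α / ‖x‖ ^ 2 * ‖u‖ * ‖v‖ := hbound u v
  · have hxx : coulombB α x x x = α := by
      rw [coulombB_apply, inner_self_sq]
      field_simp
      ring
    have h1 : |coulombB α x x x| ≤ ‖coulombB α x‖ * ‖x‖ * ‖x‖ := by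
      calc |coulombB α x x x| = ‖coulombB α x x x‖ := rfl
        _ ≤ ‖coulombB α x x‖ * ‖x‖ := (coulombB α x x).le_opNorm x
        _ ≤ ‖coulombB α x‖ * ‖x‖ * ‖x‖ :=
            mul_le_mul_of_nonneg_right ((coulombB α x).le_opNorm x) (norm_nonneg x)
    rw [hxx, abs_of_pos hα] at h1
    rw [div_le_iff₀ hr2]
    calc α ≤ ‖coulombB α x‖ * ‖x‖ * ‖x‖ := h1
      _ = ‖coulombB α x‖ * ‖x‖ ^ 2 := by ring

/-- The norm of the second iterated derivative. -/
lemma norm_iteratedFDeriv_coulomb {α : ℝ} (hα : 0 < α) {x : E} (hx : x ≠ 0) :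
    ‖iteratedFDeriv ℝ 2 (fun y : E => -α * Real.log ‖y‖) x‖ = α / ‖x‖ ^ 2 := by
  have h2 : ‖iteratedFDeriv ℝ 2 (fun y : E => -α * Real.log ‖y‖) x‖
      = ‖fderiv ℝ (fderiv ℝ (fun y : E => -α * Real.log ‖y‖)) x‖ := by
    rw [← norm_iteratedFDeriv_fderiv, ← norm_iteratedFDeriv_fderiv,
      norm_iteratedFDeriv_zero]
  rw [h2]
  have hev : (fderiv ℝ (fun y : E => -α * Real.log ‖y‖)) =ᶠ[nhds x]
      (fun y : E => coulombF α y) := by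
    filter_upwards [IsOpen.mem_nhds isOpen_compl_singleton hx] with y hy
    exact (hasFDerivAt_coulombG α hy).fderiv
  rw [hev.fderiv_eq, (hasFDerivAt_coulombF α hx).fderiv]
  exact norm_coulombB hα hx

end CoulombAux

/-- For the two-dimensional repulsive Coulomb potential `G(x) = −α log|x|`:
`‖D²G(x)‖ = α/|x|²` for `x ≠ 0`, and the steepness condition (2.16) of the
paper, `1 + e^{G(x)}/|x| ≥ a₆‖D²G(x)‖²` for some `a₆ > 0`, holds if and only if
`α ≥ 3` (Remark 2.5). -/
theorem coulomb_log_steepness (α : ℝ) (hα : 0 < α)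
    (G : EuclideanSpace ℝ (Fin 2) → ℝ) (hG : ∀ x, G x = -α * Real.log ‖x‖) :
    (∀ x : EuclideanSpace ℝ (Fin 2), x ≠ 0 →
      ‖iteratedFDeriv ℝ 2 G x‖ = α / ‖x‖ ^ 2) ∧
    ((∃ a₆ > (0:ℝ), ∀ x : EuclideanSpace ℝ (Fin 2), x ≠ 0 →
        a₆ * ‖iteratedFDeriv ℝ 2 G x‖ ^ 2 ≤ 1 + Real.exp (G x) / ‖x‖) ↔ 3 ≤ α) := by
  have hGfun : G = fun y => -α * Real.log ‖y‖ := funext hG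
  subst hGfun
  have hnorm : ∀ x : EuclideanSpace ℝ (Fin 2), x ≠ 0 →
      ‖iteratedFDeriv ℝ 2 (fun y : EuclideanSpace ℝ (Fin 2) => -α * Real.log ‖y‖) x‖
        = α / ‖x‖ ^ 2 := fun x hx => norm_iteratedFDeriv_coulomb hα hx
  refine ⟨hnorm, ?_, ?_⟩
  · -- condition → 3 ≤ α
    rintro ⟨a₆, ha₆, hcond⟩
    by_contra hcon
    push_neg at hcon
    set ε : ℝ := a₆ * α ^ 2 with hε
    have hεpos : 0 < ε := by positivity
    have h3α : (0 : ℝ) < 3 - α := by linarith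
    set c : ℝ := min 1 (min ((ε / 3) ^ ((4 : ℝ))⁻¹) ((ε / 3) ^ (3 - α)⁻¹)) with hc
    have hcpos : 0 < c := by
      refine lt_min one_pos (lt_min ?_ ?_) <;> positivity
    have hc1 : c ≤ 1 := min_le_left _ _
    set x : EuclideanSpace ℝ (Fin 2) := c • EuclideanSpace.single (0 : Fin 2) (1 : ℝ) with hxdef
    have hxn : ‖x‖ = c := by
      rw [hxdef, norm_smul, EuclideanSpace.norm_single]
      simp [abs_of_pos hcpos]
    have hxne : x ≠ 0 := by
      intro h
      rw [h] at hxn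
      simp at hxn
      exact hcpos.ne' hxn.symm
    have hineq := hcond x hxne
    rw [hnorm x hxne] at hineq
    simp only [hxn] at hineq
    -- hineq : a₆ * (α / c ^ 2) ^ 2 ≤ 1 + Real.exp (-α * Real.log c) / c
    have hexp : Real.exp (-α * Real.log c) = c ^ (-α) := by
      rw [Real.rpow_def_of_pos hcpos]; ring_nf
    rw [hexp] at hineq
    have hc4 : (0 : ℝ) < c ^ (4 : ℕ) := by positivity
    have hmul : ε ≤ c ^ (4 : ℕ) + c ^ ((3 : ℝ) - α) := by
      have h1 : a₆ * (α / c ^ 2) ^ 2 = ε / c ^ (4 : ℕ) := by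
        field_simp [hε]
        ring
      rw [h1, div_le_iff₀ hc4] at hineq
      calc ε ≤ (1 + c ^ (-α) / c) * c ^ (4 : ℕ) := hineq
        _ = c ^ (4 : ℕ) + c ^ (-α) * c ^ (3 : ℕ) := by
            field_simp
        _ = c ^ (4 : ℕ) + c ^ ((3 : ℝ) - α) := by
            congr 1
            rw [← Real.rpow_natCast c 3, ← Real.rpow_add hcpos]
            norm_num
            ring_nf
    have hb1 : c ^ (4 : ℕ) ≤ ε / 3 := by
      have hle : c ≤ (ε / 3) ^ ((4 : ℝ))⁻¹ := (min_le_right _ _).trans (min_le_left _ _)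
      have := Real.rpow_le_rpow hcpos.le hle (by norm_num : (0:ℝ) ≤ 4)
      rw [← Real.rpow_natCast c 4]
      push_cast
      calc c ^ (4 : ℝ) ≤ ((ε / 3) ^ ((4 : ℝ))⁻¹) ^ (4 : ℝ) := this
        _ = ε / 3 := by
            rw [← Real.rpow_mul (by positivity)]
            norm_num
    have hb2 : c ^ ((3 : ℝ) - α) ≤ ε / 3 := by
      have hle : c ≤ (ε / 3) ^ (3 - α)⁻¹ := (min_le_right _ _).trans (min_le_right _ _)
      have := Real.rpow_le_rpow hcpos.le hle h3α.le
      calc c ^ ((3 : ℝ) - α) ≤ ((ε / 3) ^ (3 - α)⁻¹) ^ ((3 : ℝ) - α) := this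
        _ = ε / 3 := by
            rw [← Real.rpow_mul (by positivity), inv_mul_cancel₀ h3α.ne']
            exact Real.rpow_one _
    linarith
  · -- 3 ≤ α → condition
    intro h3
    refine ⟨(α ^ 2)⁻¹, by positivity, fun x hx => ?_⟩
    rw [hnorm x hx]
    have hr : (0 : ℝ) < ‖x‖ := norm_pos_iff.2 hx
    set r : ℝ := ‖x‖ with hrdef
    have hLHS : (α ^ 2)⁻¹ * (α / r ^ 2) ^ 2 = (r ^ (4 : ℕ))⁻¹ := by
      field_simp
    rw [hLHS]
    have hexp : Real.exp (-α * Real.log r) = r ^ (-α) := by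
      rw [Real.rpow_def_of_pos hr]; ring_nf
    rw [hexp]
    have hpos : (0 : ℝ) ≤ r ^ (-α) / r := by positivity
    rcases le_or_gt 1 r with hr1 | hr1
    · have : (1 : ℝ) ≤ r ^ (4 : ℕ) := one_le_pow₀ hr1
      have h4 : (r ^ (4 : ℕ))⁻¹ ≤ 1 := inv_le_one_of_one_le₀ this
      linarith
    · have hkey : (r ^ (4 : ℕ))⁻¹ ≤ r ^ (-α) / r := by
        have h1 : (r ^ (4 : ℕ))⁻¹ = r ^ ((-4 : ℝ)) := by
          rw [← Real.rpow_natCast r 4, ← Real.rpow_neg hr.le]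
          norm_num
        have h2 : r ^ ((-4 : ℝ)) ≤ r ^ (-α - 1) :=
          Real.rpow_le_rpow_of_exponent_ge hr hr1.le (by linarith)
        have h3 : r ^ (-α - 1) = r ^ (-α) / r := by
          rw [sub_eq_add_neg, Real.rpow_add hr, Real.rpow_neg_one]
          rw [div_eq_mul_inv]
        rw [h1, ← h3]
        exact h2
      linarith
end

section
/- Let d ≥ 1, let c₁, c₂ > 0, define the Lennard-Jones potential G : ℝ^d∖{0} → ℝ by G(x) = c₁·|x|^{−12} − c₂·|x|^{−6}, and set β₁ = 13 and β₂ = 7. Then: (i) G(x) → ∞ as |x| → 0, and there exists a₃ > 0 such that for all x ≠ 0: |G(x)| ≤ a₃(1 + |x| + |x|^{−13}), |∇G(x)| ≤ a₃(1 + |x|^{−13}), and ‖D²G(x)‖ ≤ a₃(1 + |x|^{−14}); (ii) there exists a₅ ≥ 0 such that |∇G(x) + 12c₁·x/|x|^{14}| ≤ a₅·|x|^{−7} + a₅ for all x ≠ 0, i.e., condition (2.15) holds with a₄ = 12c₁ and β₂ = 7 < β₁ = 13; (iii) there exists a₆ > 0 such that 1 + e^{G(x)}/|x|^{13} ≥ a₆·‖D²G(x)‖²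 for all x ≠ 0. -/
open Set Real Filter

variable {E : Type*} [NormedAddCommGroup E] [InnerProductSpace ℝ E]

lemma aux1 (p : ℝ) {x : E} (hx : x ≠ 0) :
    HasFDerivAt (fun y : E => ‖y‖ ^ p) ((p * ‖x‖ ^ (p - 2)) • innerSL ℝ x) x := by
  have hn : (0:ℝ) < ‖x‖ := norm_pos_iff.mpr hx
  have h := (hasStrictFDerivAt_norm_sq x).hasFDerivAt.rpow_const
    (p := p/2) (Or.inl (by positivity))
  have e1 : ∀ y : E, (‖y‖ ^ 2) ^ (p/2) = ‖y‖ ^ p := by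
    intro y
    rw [← Real.rpow_natCast ‖y‖ 2, ← Real.rpow_mul (norm_nonneg y)]
    congr 1; ring
  have e2 : (‖x‖ ^ 2) ^ (p/2 - 1) = ‖x‖ ^ (p - 2) := by
    rw [← Real.rpow_natCast ‖x‖ 2, ← Real.rpow_mul (norm_nonneg x)]
    congr 1; ring
  convert h using 1
  · funext y; exact (e1 y).symm
  · ext y
    simp [e2, smul_smul, two_smul]
    ring

/-- The inner product as a continuous linear map into the dual, real case. -/
noncomputable def Jmap (E : Type*) [NormedAddCommGroup E] [InnerProductSpace ℝ E] :
    E →L[ℝ] (E →L[ℝ] ℝ) :=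
  LinearMap.mkContinuous
    { toFun := fun y => innerSL ℝ y
      map_add' := by intro y z; ext v; simp [inner_add_left]
      map_smul' := by intro c y; ext v; simp [inner_smul_left] }
    1 (fun y => by simp [innerSL_apply_norm])

@[simp] lemma Jmap_apply {E : Type*} [NormedAddCommGroup E] [InnerProductSpace ℝ E]
    (y v : E) : Jmap E y v = inner ℝ y v := rfl

lemma lj_hasFDerivAt (c₁ c₂ : ℝ) {x : E} (hx : x ≠ 0) :
    HasFDerivAt (fun y : E => c₁ * ‖y‖ ^ (-(12:ℝ)) - c₂ * ‖y‖ ^ (-(6:ℝ)))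
      (((-12 * c₁) * ‖x‖ ^ (-(14:ℝ)) + (6 * c₂) * ‖x‖ ^ (-(8:ℝ))) • innerSL ℝ x) x := by
  have h := (((aux1 (-(12:ℝ)) hx).const_mul c₁).sub ((aux1 (-(6:ℝ)) hx).const_mul c₂))
  refine HasFDerivAt.congr_fderiv h ?_
  ext y
  norm_num [smul_smul]
  ring

lemma lj_hasGradientAt (c₁ c₂ : ℝ) {x : E} [CompleteSpace E] (hx : x ≠ 0) :
    HasGradientAt (fun y : E => c₁ * ‖y‖ ^ (-(12:ℝ)) - c₂ * ‖y‖ ^ (-(6:ℝ)))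
      (((-12 * c₁) * ‖x‖ ^ (-(14:ℝ)) + (6 * c₂) * ‖x‖ ^ (-(8:ℝ))) • x) x := by
  rw [hasGradientAt_iff_hasFDerivAt]
  refine HasFDerivAt.congr_fderiv (lj_hasFDerivAt c₁ c₂ hx) ?_
  ext y
  simp [InnerProductSpace.toDual_apply_apply, inner_smul_left]

lemma aux2 (a b p q : ℝ) {x : E} (hx : x ≠ 0) :
    HasFDerivAt (fun y : E => a * ‖y‖ ^ p + b * ‖y‖ ^ q)
      ((a * p * ‖x‖ ^ (p - 2) + b * q * ‖x‖ ^ (q - 2)) • innerSL ℝ x) x := by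
  have h := ((aux1 p hx).const_mul a).add ((aux1 q hx).const_mul b)
  refine HasFDerivAt.congr_fderiv h ?_
  ext y
  norm_num [smul_smul]
  ring

lemma lj_second (c₁ c₂ : ℝ) (hc₁ : 0 < c₁) (hc₂ : 0 < c₂) {x : E} (hx : x ≠ 0) :
    ‖iteratedFDeriv ℝ 2 (fun y : E => c₁ * ‖y‖ ^ (-(12:ℝ)) - c₂ * ‖y‖ ^ (-(6:ℝ))) x‖ ≤
      180 * c₁ * ‖x‖ ^ (-(14:ℝ)) + 54 * c₂ * ‖x‖ ^ (-(8:ℝ)) := by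
  have hn : (0:ℝ) < ‖x‖ := norm_pos_iff.mpr hx
  set G : E → ℝ := fun y => c₁ * ‖y‖ ^ (-(12:ℝ)) - c₂ * ‖y‖ ^ (-(6:ℝ)) with hGdef
  set κ : E → ℝ := fun y => (-12 * c₁) * ‖y‖ ^ (-(14:ℝ)) + (6 * c₂) * ‖y‖ ^ (-(8:ℝ)) with hκdef
  set μ : ℝ := (-12 * c₁) * (-14) * ‖x‖ ^ (-(16:ℝ)) + (6 * c₂) * (-8) * ‖x‖ ^ (-(10:ℝ)) with hμdef
  have hκ : HasFDerivAt κ ((μ) • innerSL ℝ x) x := by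
    have h := aux2 (-12 * c₁) (6 * c₂) (-(14:ℝ)) (-(8:ℝ)) hx
    have e : (-(14:ℝ)) - 2 = -(16:ℝ) := by norm_num
    have e' : (-(8:ℝ)) - 2 = -(10:ℝ) := by norm_num
    rw [e, e'] at h
    exact h
  have hΦ : HasFDerivAt (fun y => κ y • Jmap E y)
      (κ x • Jmap E + (μ • innerSL ℝ x).smulRight (Jmap E x)) x :=
    hκ.smul (Jmap E).hasFDerivAt
  have heq : fderiv ℝ G =ᶠ[nhds x] fun y => κ y • Jmap E y := by
    filter_upwards [isOpen_compl_singleton.mem_nhds hx] with y hy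
    have hy' : y ≠ 0 := hy
    have h := lj_hasFDerivAt c₁ c₂ hy'
    rw [hGdef, h.fderiv]
    rfl
  have hB : HasFDerivAt (fderiv ℝ G)
      (κ x • Jmap E + (μ • innerSL ℝ x).smulRight (Jmap E x)) x :=
    hΦ.congr_of_eventuallyEq heq
  have hfd := hB.fderiv
  have h14 : (0:ℝ) ≤ ‖x‖ ^ (-(14:ℝ)) := (Real.rpow_pos_of_pos hn _).le
  have h8 : (0:ℝ) ≤ ‖x‖ ^ (-(8:ℝ)) := (Real.rpow_pos_of_pos hn _).le
  have h16 : (0:ℝ) ≤ ‖x‖ ^ (-(16:ℝ)) := (Real.rpow_pos_of_pos hn _).le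
  have h10 : (0:ℝ) ≤ ‖x‖ ^ (-(10:ℝ)) := (Real.rpow_pos_of_pos hn _).le
  have e2 : ‖x‖ ^ (2:ℝ) = ‖x‖ * ‖x‖ := by
    rw [show (2:ℝ) = ((2:ℕ):ℝ) by norm_num, Real.rpow_natCast]; ring
  have e14 : ‖x‖ ^ (-(16:ℝ)) * (‖x‖ * ‖x‖) = ‖x‖ ^ (-(14:ℝ)) := by
    rw [← e2, ← Real.rpow_add hn]; norm_num
  have e8 : ‖x‖ ^ (-(10:ℝ)) * (‖x‖ * ‖x‖) = ‖x‖ ^ (-(8:ℝ)) := by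
    rw [← e2, ← Real.rpow_add hn]; norm_num
  have hkx : κ x = (-12 * c₁) * ‖x‖ ^ (-(14:ℝ)) + (6 * c₂) * ‖x‖ ^ (-(8:ℝ)) := rfl
  have hik : |κ x| ≤ 12 * c₁ * ‖x‖ ^ (-(14:ℝ)) + 6 * c₂ * ‖x‖ ^ (-(8:ℝ)) := by
    rw [hkx]
    have p1 : (0:ℝ) ≤ c₁ * ‖x‖ ^ (-(14:ℝ)) := mul_nonneg hc₁.le h14
    have p2 : (0:ℝ) ≤ c₂ * ‖x‖ ^ (-(8:ℝ)) := mul_nonneg hc₂.le h8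
    refine abs_le.mpr ⟨by linarith, by linarith⟩
  have hiμ : |μ| ≤ 168 * c₁ * ‖x‖ ^ (-(16:ℝ)) + 48 * c₂ * ‖x‖ ^ (-(10:ℝ)) := by
    rw [hμdef]
    have p1 : (0:ℝ) ≤ c₁ * ‖x‖ ^ (-(16:ℝ)) := mul_nonneg hc₁.le h16
    have p2 : (0:ℝ) ≤ c₂ * ‖x‖ ^ (-(10:ℝ)) := mul_nonneg hc₂.le h10
    refine abs_le.mpr ⟨by linarith, by linarith⟩
  have hbound : ∀ u v : E,
      |(κ x • Jmap E + (μ • innerSL ℝ x).smulRight (Jmap E x)) u v| ≤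
        (180 * c₁ * ‖x‖ ^ (-(14:ℝ)) + 54 * c₂ * ‖x‖ ^ (-(8:ℝ))) * (‖u‖ * ‖v‖) := by
    intro u v
    have happ : (κ x • Jmap E + (μ • innerSL ℝ x).smulRight (Jmap E x)) u v
        = κ x * (inner ℝ u v : ℝ) + (μ * (inner ℝ x u : ℝ)) * (inner ℝ x v : ℝ) := by
      simp [ContinuousLinearMap.smulRight_apply]
    rw [happ]
    have hiu : |(inner ℝ u v : ℝ)| ≤ ‖u‖ * ‖v‖ := abs_real_inner_le_norm u v
    have hixu : |(inner ℝ x u : ℝ)| ≤ ‖x‖ * ‖u‖ := abs_real_inner_le_norm x u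
    have hixv : |(inner ℝ x v : ℝ)| ≤ ‖x‖ * ‖v‖ := abs_real_inner_le_norm x v
    have t1 : |κ x| * |(inner ℝ u v : ℝ)| ≤
        (12 * c₁ * ‖x‖ ^ (-(14:ℝ)) + 6 * c₂ * ‖x‖ ^ (-(8:ℝ))) * (‖u‖ * ‖v‖) :=
      mul_le_mul hik hiu (abs_nonneg _) (by positivity)
    have t2 : |μ| * |(inner ℝ x u : ℝ)| * |(inner ℝ x v : ℝ)| ≤
        ((168 * c₁ * ‖x‖ ^ (-(16:ℝ)) + 48 * c₂ * ‖x‖ ^ (-(10:ℝ))) * (‖x‖ * ‖u‖)) * (‖x‖ * ‖v‖) := by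
      refine mul_le_mul ?_ hixv (abs_nonneg _) (by positivity)
      exact mul_le_mul hiμ hixu (abs_nonneg _) (by positivity)
    calc |κ x * (inner ℝ u v : ℝ) + (μ * (inner ℝ x u : ℝ)) * (inner ℝ x v : ℝ)|
        ≤ |κ x| * |(inner ℝ u v : ℝ)| + |μ| * |(inner ℝ x u : ℝ)| * |(inner ℝ x v : ℝ)| := by
          refine (abs_add_le _ _).trans ?_
          simp [abs_mul]
      _ ≤ (12 * c₁ * ‖x‖ ^ (-(14:ℝ)) + 6 * c₂ * ‖x‖ ^ (-(8:ℝ))) * (‖u‖ * ‖v‖)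
          + ((168 * c₁ * ‖x‖ ^ (-(16:ℝ)) + 48 * c₂ * ‖x‖ ^ (-(10:ℝ))) * (‖x‖ * ‖u‖)) * (‖x‖ * ‖v‖) :=
          add_le_add t1 t2
      _ = (180 * c₁ * ‖x‖ ^ (-(14:ℝ)) + 54 * c₂ * ‖x‖ ^ (-(8:ℝ))) * (‖u‖ * ‖v‖) := by
          linear_combination (168 * c₁ * (‖u‖ * ‖v‖)) * e14 + (48 * c₂ * (‖u‖ * ‖v‖)) * e8
  refine ContinuousMultilinearMap.opNorm_le_bound (by positivity) fun m => ?_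
  rw [iteratedFDeriv_two_apply, hfd]
  have := hbound (m 0) (m 1)
  simpa [Fin.prod_univ_two, Real.norm_eq_abs] using this

lemma rpow_le_one_add (t : ℝ) (ht : 0 < t) {p q : ℝ} (hpq : q ≤ p) (hp : p ≤ 0) :
    t ^ p ≤ 1 + t ^ q := by
  rcases le_total 1 t with h | h
  · have h1 : t ^ p ≤ 1 := Real.rpow_le_one_of_one_le_of_nonpos h hp
    have h2 : (0:ℝ) ≤ t ^ q := (Real.rpow_pos_of_pos ht q).le
    linarith
  · have h1 : t ^ p ≤ t ^ q := Real.rpow_le_rpow_of_exponent_ge ht h hpq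
    linarith

lemma quart_le_exp {u : ℝ} (hu : 0 ≤ u) : u ^ 4 / 24 ≤ Real.exp u := by
  have h := Real.sum_le_exp_of_nonneg hu 5
  have h2 : u ^ 4 / (Nat.factorial 4 : ℝ) ≤ ∑ i ∈ Finset.range 5, u ^ i / (Nat.factorial i : ℝ) :=
    Finset.single_le_sum (f := fun i => u ^ i / (Nat.factorial i : ℝ))
      (fun i _ => by positivity) (Finset.self_mem_range_succ 4)
  have : (Nat.factorial 4 : ℝ) = 24 := by norm_num [Nat.factorial]
  rw [this] at h2
  exact h2.trans h


set_option maxHeartbeats 1600000 in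
/-- The Lennard-Jones potential `G(x) = c₁|x|^{−12} − c₂|x|^{−6}` satisfies
Assumption 2.4 of the paper with `β₁ = 13`, `β₂ = 7`: the growth/singularity
bounds (2.12)–(2.14), the near-origin behavior (2.15) with `a₄ = 12c₁`, and the
steepness condition (2.16) (Remark 2.5). -/
theorem lennard_jones_assumptions (d : ℕ) (hd : 1 ≤ d) (c₁ c₂ : ℝ)
    (hc₁ : 0 < c₁) (hc₂ : 0 < c₂)
    (G : EuclideanSpace ℝ (Fin d) → ℝ)
    (hG : ∀ x, G x = c₁ * ‖x‖ ^ (-(12:ℝ)) - c₂ * ‖x‖ ^ (-(6:ℝ))) :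
    Filter.Tendsto G (nhdsWithin 0 {(0 : EuclideanSpace ℝ (Fin d))}ᶜ) Filter.atTop ∧
    (∃ a₃ > (0:ℝ), ∀ x : EuclideanSpace ℝ (Fin d), x ≠ 0 →
      |G x| ≤ a₃ * (1 + ‖x‖ + ‖x‖ ^ (-(13:ℝ))) ∧
      ‖gradient G x‖ ≤ a₃ * (1 + ‖x‖ ^ (-(13:ℝ))) ∧
      ‖iteratedFDeriv ℝ 2 G x‖ ≤ a₃ * (1 + ‖x‖ ^ (-(14:ℝ)))) ∧
    (∃ a₅ ≥ (0:ℝ), ∀ x : EuclideanSpace ℝ (Fin d), x ≠ 0 →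
      ‖gradient G x + ((12 * c₁) / ‖x‖ ^ (14:ℝ)) • x‖ ≤ a₅ * ‖x‖ ^ (-(7:ℝ)) + a₅) ∧
    (∃ a₆ > (0:ℝ), ∀ x : EuclideanSpace ℝ (Fin d), x ≠ 0 →
      a₆ * ‖iteratedFDeriv ℝ 2 G x‖ ^ 2 ≤ 1 + Real.exp (G x) / ‖x‖ ^ (13:ℝ)) := by
  have hGfun : G = fun y : EuclideanSpace ℝ (Fin d) => c₁ * ‖y‖ ^ (-(12:ℝ)) - c₂ * ‖y‖ ^ (-(6:ℝ)) := funext hG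
  -- gradient formula
  have hgrad : ∀ x : EuclideanSpace ℝ (Fin d), x ≠ 0 → gradient G x =
      ((-12 * c₁) * ‖x‖ ^ (-(14:ℝ)) + (6 * c₂) * ‖x‖ ^ (-(8:ℝ))) • x := by
    intro x hx
    have h := lj_hasGradientAt (E := EuclideanSpace ℝ (Fin d)) c₁ c₂ hx
    rw [hGfun]
    exact h.gradient
  -- part (i)
  have part1 : Filter.Tendsto G (nhdsWithin 0 {(0 : EuclideanSpace ℝ (Fin d))}ᶜ) Filter.atTop := by
    have hnorm : Tendsto (fun x : EuclideanSpace ℝ (Fin d) => ‖x‖) (nhdsWithin 0 {(0:EuclideanSpace ℝ (Fin d))}ᶜ) (nhdsWithin 0 (Ioi 0)) := by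
      rw [tendsto_nhdsWithin_iff]
      constructor
      · simpa using (continuous_norm.tendsto (0:EuclideanSpace ℝ (Fin d))).mono_left nhdsWithin_le_nhds
      · filter_upwards [self_mem_nhdsWithin] with y hy
        exact mem_Ioi.mpr (norm_pos_iff.mpr hy)
    have h1 : Tendsto (fun t : ℝ => (t ^ (12:ℕ))⁻¹) (nhdsWithin 0 (Ioi 0)) atTop := by
      apply tendsto_inv_nhdsGT_zero.comp
      rw [tendsto_nhdsWithin_iff]
      constructor
      · simpa using ((continuous_pow 12).tendsto (0:ℝ)).mono_left nhdsWithin_le_nhds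
      · filter_upwards [self_mem_nhdsWithin] with t ht
        exact mem_Ioi.mpr (pow_pos ht 12)
    have h2 : Tendsto (fun t : ℝ => c₁ - c₂ * t ^ (6:ℕ)) (nhdsWithin 0 (Ioi 0)) (nhds c₁) := by
      have hc : Continuous (fun t : ℝ => c₁ - c₂ * t ^ (6:ℕ)) := by fun_prop
      have := (hc.tendsto (0:ℝ)).mono_left (nhdsWithin_le_nhds (s := Ioi (0:ℝ)))
      simpa using this
    have h3 := h1.atTop_mul_pos hc₁ h2
    have hf : Tendsto (fun t : ℝ => c₁ * t ^ (-(12:ℝ)) - c₂ * t ^ (-(6:ℝ)))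
        (nhdsWithin 0 (Ioi 0)) atTop := by
      refine h3.congr' ?_
      filter_upwards [self_mem_nhdsWithin] with t ht
      have ht' : (0:ℝ) < t := ht
      rw [show (-(12:ℝ)) = -((12:ℕ):ℝ) by norm_num, show (-(6:ℝ)) = -((6:ℕ):ℝ) by norm_num,
        Real.rpow_neg ht'.le, Real.rpow_neg ht'.le, Real.rpow_natCast, Real.rpow_natCast]
      field_simp
    exact Filter.Tendsto.congr (fun x => (hG x).symm) (hf.comp hnorm)
  refine ⟨part1, ?_, ?_, ?_⟩
  -- part (ii): the bounds with a₃
  · refine ⟨200 * (c₁ + c₂), by positivity, fun x hx => ?_⟩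
    have hn : (0:ℝ) < ‖x‖ := norm_pos_iff.mpr hx
    have h13 : (0:ℝ) < ‖x‖ ^ (-(13:ℝ)) := Real.rpow_pos_of_pos hn _
    have h14 : (0:ℝ) < ‖x‖ ^ (-(14:ℝ)) := Real.rpow_pos_of_pos hn _
    have hub13 : (0:ℝ) ≤ 1 + ‖x‖ ^ (-(13:ℝ)) := by positivity
    have hub14 : (0:ℝ) ≤ 1 + ‖x‖ ^ (-(14:ℝ)) := by positivity
    refine ⟨?_, ?_, ?_⟩
    · rw [hG x]
      have hA : ‖x‖ ^ (-(12:ℝ)) ≤ 1 + ‖x‖ ^ (-(13:ℝ)) :=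
        rpow_le_one_add _ hn (by norm_num) (by norm_num)
      have hB : ‖x‖ ^ (-(6:ℝ)) ≤ 1 + ‖x‖ ^ (-(13:ℝ)) :=
        rpow_le_one_add _ hn (by norm_num) (by norm_num)
      have p12 : (0:ℝ) < ‖x‖ ^ (-(12:ℝ)) := Real.rpow_pos_of_pos hn _
      have p6 : (0:ℝ) < ‖x‖ ^ (-(6:ℝ)) := Real.rpow_pos_of_pos hn _
      have hA' := mul_le_mul_of_nonneg_left hA hc₁.le
      have hB' := mul_le_mul_of_nonneg_left hB hc₂.le
      have q1 : (0:ℝ) ≤ c₁ * ‖x‖ := mul_nonneg hc₁.le hn.le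
      have q2 : (0:ℝ) ≤ c₂ * ‖x‖ := mul_nonneg hc₂.le hn.le
      have q3 : (0:ℝ) ≤ c₁ * ‖x‖ ^ (-(13:ℝ)) := by positivity
      have q4 : (0:ℝ) ≤ c₂ * ‖x‖ ^ (-(13:ℝ)) := by positivity
      have q5 : (0:ℝ) ≤ c₁ * ‖x‖ ^ (-(12:ℝ)) := by positivity
      have q6 : (0:ℝ) ≤ c₂ * ‖x‖ ^ (-(6:ℝ)) := by positivity
      refine abs_le.mpr ⟨by nlinarith, by nlinarith⟩
    · rw [hgrad x hx, norm_smul, Real.norm_eq_abs]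
      have h8 : (0:ℝ) < ‖x‖ ^ (-(8:ℝ)) := Real.rpow_pos_of_pos hn _
      have hik : |(-12 * c₁) * ‖x‖ ^ (-(14:ℝ)) + (6 * c₂) * ‖x‖ ^ (-(8:ℝ))| ≤
          12 * c₁ * ‖x‖ ^ (-(14:ℝ)) + 6 * c₂ * ‖x‖ ^ (-(8:ℝ)) := by
        have p1 : (0:ℝ) ≤ c₁ * ‖x‖ ^ (-(14:ℝ)) := by positivity
        have p2 : (0:ℝ) ≤ c₂ * ‖x‖ ^ (-(8:ℝ)) := by positivity
        refine abs_le.mpr ⟨by linarith, by linarith⟩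
      have hstep := mul_le_mul_of_nonneg_right hik hn.le
      have e13 : ‖x‖ ^ (-(14:ℝ)) * ‖x‖ = ‖x‖ ^ (-(13:ℝ)) := by
        rw [← Real.rpow_add_one hn.ne' (-(14:ℝ))]
        norm_num
      have e7 : ‖x‖ ^ (-(8:ℝ)) * ‖x‖ = ‖x‖ ^ (-(7:ℝ)) := by
        rw [← Real.rpow_add_one hn.ne' (-(8:ℝ))]
        norm_num
      have h7 : ‖x‖ ^ (-(7:ℝ)) ≤ 1 + ‖x‖ ^ (-(13:ℝ)) :=
        rpow_le_one_add _ hn (by norm_num) (by norm_num)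
      have h13' : ‖x‖ ^ (-(13:ℝ)) ≤ 1 + ‖x‖ ^ (-(13:ℝ)) := by linarith
      calc |(-12 * c₁) * ‖x‖ ^ (-(14:ℝ)) + (6 * c₂) * ‖x‖ ^ (-(8:ℝ))| * ‖x‖
          ≤ (12 * c₁ * ‖x‖ ^ (-(14:ℝ)) + 6 * c₂ * ‖x‖ ^ (-(8:ℝ))) * ‖x‖ := hstep
        _ = 12 * c₁ * ‖x‖ ^ (-(13:ℝ)) + 6 * c₂ * ‖x‖ ^ (-(7:ℝ)) := by
            linear_combination (12 * c₁) * e13 + (6 * c₂) * e7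
        _ ≤ 200 * (c₁ + c₂) * (1 + ‖x‖ ^ (-(13:ℝ))) := by
            have u1 := mul_le_mul_of_nonneg_left h7 (by positivity : (0:ℝ) ≤ 6 * c₂)
            have u2 := mul_le_mul_of_nonneg_left h13' (by positivity : (0:ℝ) ≤ 12 * c₁)
            have u3 : (0:ℝ) ≤ (188 * c₁ + 194 * c₂) * (1 + ‖x‖ ^ (-(13:ℝ))) := by positivity
            nlinarith
    · rw [hGfun]
      refine (lj_second c₁ c₂ hc₁ hc₂ hx).trans ?_
      have h8 : ‖x‖ ^ (-(8:ℝ)) ≤ 1 + ‖x‖ ^ (-(14:ℝ)) :=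
        rpow_le_one_add _ hn (by norm_num) (by norm_num)
      have h14' : ‖x‖ ^ (-(14:ℝ)) ≤ 1 + ‖x‖ ^ (-(14:ℝ)) := by linarith
      have u1 := mul_le_mul_of_nonneg_left h8 (by positivity : (0:ℝ) ≤ 54 * c₂)
      have u2 := mul_le_mul_of_nonneg_left h14' (by positivity : (0:ℝ) ≤ 180 * c₁)
      have u3 : (0:ℝ) ≤ (20 * c₁ + 146 * c₂) * (1 + ‖x‖ ^ (-(14:ℝ))) := by positivity
      nlinarith
  -- part (iii): a₅ = 6 c₂
  · refine ⟨6 * c₂, by positivity, fun x hx => ?_⟩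
    have hn : (0:ℝ) < ‖x‖ := norm_pos_iff.mpr hx
    have hsum : gradient G x + ((12 * c₁) / ‖x‖ ^ (14:ℝ)) • x =
        ((6 * c₂) * ‖x‖ ^ (-(8:ℝ))) • x := by
      rw [hgrad x hx, ← add_smul]
      congr 1
      rw [Real.rpow_neg hn.le 14, div_eq_mul_inv]
      ring
    rw [hsum, norm_smul, Real.norm_eq_abs, abs_of_nonneg (by positivity)]
    have e7 : ‖x‖ ^ (-(8:ℝ)) * ‖x‖ = ‖x‖ ^ (-(7:ℝ)) := by
      rw [← Real.rpow_add_one hn.ne' (-(8:ℝ))]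
      norm_num
    calc (6 * c₂) * ‖x‖ ^ (-(8:ℝ)) * ‖x‖ = 6 * c₂ * ‖x‖ ^ (-(7:ℝ)) := by
          linear_combination (6 * c₂) * e7
      _ ≤ 6 * c₂ * ‖x‖ ^ (-(7:ℝ)) + 6 * c₂ := le_add_of_nonneg_right (by positivity)
  -- part (iv): steepness
  · set K : ℝ := 180 * c₁ + 54 * c₂ with hK
    have hKpos : 0 < K := by positivity
    set δ : ℝ := min 1 ((c₁ / (2 * c₂)) ^ (((6:ℕ):ℝ)⁻¹)) with hδ
    have hδpos : 0 < δ := lt_min one_pos (Real.rpow_pos_of_pos (by positivity) _)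
    set M : ℝ := K * (1 + δ ^ (-(14:ℝ))) with hM
    have hMpos : 0 < M := by positivity
    set C₀ : ℝ := (c₁ / 2) ^ 4 / 24 with hC₀
    have hC₀pos : 0 < C₀ := by positivity
    refine ⟨min (1 / M ^ 2) (C₀ / (4 * K ^ 2)), lt_min (by positivity) (by positivity),
      fun x hx => ?_⟩
    have hn : (0:ℝ) < ‖x‖ := norm_pos_iff.mpr hx
    have h14 : (0:ℝ) < ‖x‖ ^ (-(14:ℝ)) := Real.rpow_pos_of_pos hn _
    have hD2 : ‖iteratedFDeriv ℝ 2 G x‖ ≤ K * (1 + ‖x‖ ^ (-(14:ℝ))) := by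
      rw [hGfun]
      refine (lj_second c₁ c₂ hc₁ hc₂ hx).trans ?_
      rw [hK]
      have h8 : ‖x‖ ^ (-(8:ℝ)) ≤ 1 + ‖x‖ ^ (-(14:ℝ)) :=
        rpow_le_one_add _ hn (by norm_num) (by norm_num)
      have u1 := mul_le_mul_of_nonneg_left h8 (by positivity : (0:ℝ) ≤ 54 * c₂)
      nlinarith
    have hexp_nonneg : (0:ℝ) ≤ Real.exp (G x) / ‖x‖ ^ (13:ℝ) := by positivity
    rcases le_or_gt δ ‖x‖ with hcase | hcase
    · have hmono : ‖x‖ ^ (-(14:ℝ)) ≤ δ ^ (-(14:ℝ)) :=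
        Real.rpow_le_rpow_of_nonpos hδpos hcase (by norm_num)
      have hDM : ‖iteratedFDeriv ℝ 2 G x‖ ≤ M := by
        refine hD2.trans ?_
        rw [hM]
        exact mul_le_mul_of_nonneg_left (by linarith) hKpos.le
      have hsq : ‖iteratedFDeriv ℝ 2 G x‖ ^ 2 ≤ M ^ 2 :=
        pow_le_pow_left₀ (norm_nonneg _) hDM 2
      have hmain : min (1 / M ^ 2) (C₀ / (4 * K ^ 2)) * ‖iteratedFDeriv ℝ 2 G x‖ ^ 2 ≤
          (1 / M ^ 2) * M ^ 2 :=
        mul_le_mul (min_le_left _ _) hsq (by positivity) (by positivity)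
      have hone : (1 / M ^ 2) * M ^ 2 = 1 := by field_simp
      linarith
    · have ht1 : ‖x‖ ≤ 1 := le_trans hcase.le (min_le_left _ _)
      have htc : ‖x‖ < (c₁ / (2 * c₂)) ^ (((6:ℕ):ℝ)⁻¹) := lt_of_lt_of_le hcase (min_le_right _ _)
      have h6 : ‖x‖ ^ (6:ℕ) < c₁ / (2 * c₂) := by
        have h := pow_lt_pow_left₀ htc (norm_nonneg x) (by norm_num : (6:ℕ) ≠ 0)
        rwa [Real.rpow_inv_natCast_pow (by positivity) (by norm_num)] at h
      have h12 : (0:ℝ) < ‖x‖ ^ (-(12:ℝ)) := Real.rpow_pos_of_pos hn _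
      have e6 : ‖x‖ ^ (-(6:ℝ)) = ‖x‖ ^ (6:ℕ) * ‖x‖ ^ (-(12:ℝ)) := by
        rw [← Real.rpow_natCast ‖x‖ 6, ← Real.rpow_add hn]
        norm_num
      have hq : c₂ * ‖x‖ ^ (-(6:ℝ)) ≤ (c₁ / 2) * ‖x‖ ^ (-(12:ℝ)) := by
        rw [e6]
        have h6' : c₂ * ‖x‖ ^ (6:ℕ) ≤ c₁ / 2 := by
          have h := mul_le_mul_of_nonneg_left h6.le hc₂.le
          calc c₂ * ‖x‖ ^ (6:ℕ) ≤ c₂ * (c₁ / (2 * c₂)) := h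
            _ = c₁ / 2 := by field_simp
        calc c₂ * (‖x‖ ^ (6:ℕ) * ‖x‖ ^ (-(12:ℝ)))
            = (c₂ * ‖x‖ ^ (6:ℕ)) * ‖x‖ ^ (-(12:ℝ)) := by ring
          _ ≤ (c₁ / 2) * ‖x‖ ^ (-(12:ℝ)) := mul_le_mul_of_nonneg_right h6' h12.le
      have hGl : (c₁ / 2) * ‖x‖ ^ (-(12:ℝ)) ≤ G x := by
        rw [hG x]; linarith
      have hG0 : (0:ℝ) ≤ G x := le_trans (by positivity) hGl
      have hexp : ((c₁ / 2) * ‖x‖ ^ (-(12:ℝ))) ^ 4 / 24 ≤ Real.exp (G x) := by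
        have h1 := pow_le_pow_left₀ (by positivity : (0:ℝ) ≤ (c₁ / 2) * ‖x‖ ^ (-(12:ℝ))) hGl 4
        have h2 := quart_le_exp hG0
        linarith
      have e48 : (‖x‖ ^ (-(12:ℝ))) ^ (4:ℕ) = ‖x‖ ^ (-(48:ℝ)) := by
        rw [← Real.rpow_natCast (‖x‖ ^ (-(12:ℝ))) 4, ← Real.rpow_mul hn.le]
        norm_num
      have hnum : C₀ * ‖x‖ ^ (-(48:ℝ)) ≤ Real.exp (G x) := by
        rw [hC₀]
        calc (c₁ / 2) ^ 4 / 24 * ‖x‖ ^ (-(48:ℝ))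
            = ((c₁ / 2) * ‖x‖ ^ (-(12:ℝ))) ^ 4 / 24 := by rw [← e48]; ring
          _ ≤ Real.exp (G x) := hexp
      have h13pos : (0:ℝ) < ‖x‖ ^ (13:ℝ) := Real.rpow_pos_of_pos hn _
      have hdiv : C₀ * ‖x‖ ^ (-(61:ℝ)) ≤ Real.exp (G x) / ‖x‖ ^ (13:ℝ) := by
        have h := (div_le_div_iff_of_pos_right h13pos).mpr hnum
        calc C₀ * ‖x‖ ^ (-(61:ℝ)) = C₀ * ‖x‖ ^ (-(48:ℝ)) / ‖x‖ ^ (13:ℝ) := by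
              rw [mul_div_assoc, ← Real.rpow_sub hn]
              norm_num
          _ ≤ Real.exp (G x) / ‖x‖ ^ (13:ℝ) := h
      have hone14 : (1:ℝ) ≤ ‖x‖ ^ (-(14:ℝ)) :=
        Real.one_le_rpow_of_pos_of_le_one_of_nonpos hn ht1 (by norm_num)
      have e28 : (‖x‖ ^ (-(14:ℝ))) ^ (2:ℕ) = ‖x‖ ^ (-(28:ℝ)) := by
        rw [← Real.rpow_natCast (‖x‖ ^ (-(14:ℝ))) 2, ← Real.rpow_mul hn.le]
        norm_num
      have h2861 : ‖x‖ ^ (-(28:ℝ)) ≤ ‖x‖ ^ (-(61:ℝ)) :=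
        Real.rpow_le_rpow_of_exponent_ge hn ht1 (by norm_num)
      have hsq : ‖iteratedFDeriv ℝ 2 G x‖ ^ 2 ≤ (K * (1 + ‖x‖ ^ (-(14:ℝ)))) ^ 2 :=
        pow_le_pow_left₀ (norm_nonneg _) hD2 2
      have hstep : min (1 / M ^ 2) (C₀ / (4 * K ^ 2)) * ‖iteratedFDeriv ℝ 2 G x‖ ^ 2 ≤
          (C₀ / (4 * K ^ 2)) * (K * (1 + ‖x‖ ^ (-(14:ℝ)))) ^ 2 :=
        mul_le_mul (min_le_right _ _) hsq (by positivity) (by positivity)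
      have hscal : (C₀ / (4 * K ^ 2)) * (K * (1 + ‖x‖ ^ (-(14:ℝ)))) ^ 2 ≤
          C₀ * ‖x‖ ^ (-(61:ℝ)) := by
        have hexpand : (C₀ / (4 * K ^ 2)) * (K * (1 + ‖x‖ ^ (-(14:ℝ)))) ^ 2 =
            (C₀ / 4) * (1 + ‖x‖ ^ (-(14:ℝ))) ^ 2 := by
          rw [mul_pow]
          field_simp
        have h4A : (1 + ‖x‖ ^ (-(14:ℝ))) ^ 2 ≤ 4 * (‖x‖ ^ (-(14:ℝ))) ^ 2 := by
          have hp : (0:ℝ) ≤ (3 * ‖x‖ ^ (-(14:ℝ)) + 1) * (‖x‖ ^ (-(14:ℝ)) - 1) :=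
            mul_nonneg (by linarith) (by linarith)
          nlinarith [hp]
        calc (C₀ / (4 * K ^ 2)) * (K * (1 + ‖x‖ ^ (-(14:ℝ)))) ^ 2
            = (C₀ / 4) * (1 + ‖x‖ ^ (-(14:ℝ))) ^ 2 := hexpand
          _ ≤ (C₀ / 4) * (4 * (‖x‖ ^ (-(14:ℝ))) ^ 2) :=
              mul_le_mul_of_nonneg_left h4A (by positivity)
          _ = C₀ * (‖x‖ ^ (-(14:ℝ))) ^ 2 := by ring
          _ = C₀ * ‖x‖ ^ (-(28:ℝ)) := by rw [e28]
          _ ≤ C₀ * ‖x‖ ^ (-(61:ℝ)) := mul_le_mul_of_nonneg_left h2861 hC₀pos.le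
      linarith
end

section
/- Let d ≥ 1, let a₀ > 0 and q₀ ≥ 2, and let U : ℝ^d → [1,∞) be a function satisfying U(x) ≥ a₀⁻¹·|x|^{q₀} − 1 for all x ∈ ℝ^d. Then there exists κ₀ > 0 such that for every κ ∈ (0, κ₀] there exist constants 0 < c_κ ≤ C_κ with: c_κ·(U(x) + |v|²/2) ≤ U(x) + |v|²/2 + κ·⟨x,v⟩ − ⟨x,v⟩/|x| ≤ C_κ·(U(x) + |v|²/2) for all x ∈ ℝ^d∖{0} and all v ∈ ℝ^d. -/
open Set Real
open scoped RealInnerProductSpace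

/-- Feasibility of Choice 4.2 of the paper: for `U ≥ 1` with
`U(x) ≥ a₀⁻¹|x|^{q₀} − 1` (`q₀ ≥ 2`), there is `κ₀ > 0` so that for every
`κ ∈ (0, κ₀]` the perturbed energy
`U(x) + |v|²/2 + κ⟨x,v⟩ − ⟨x,v⟩/|x|` is two-sidedly comparable to
`U(x) + |v|²/2`. -/
theorem lyapunov_equivalence (d : ℕ) (hd : 1 ≤ d) (a₀ q₀ : ℝ)
    (ha₀ : 0 < a₀) (hq₀ : 2 ≤ q₀)
    (U : EuclideanSpace ℝ (Fin d) → ℝ) (hU1 : ∀ x, 1 ≤ U x)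
    (hUlb : ∀ x : EuclideanSpace ℝ (Fin d), a₀⁻¹ * ‖x‖ ^ q₀ - 1 ≤ U x) :
    ∃ κ₀ > (0:ℝ), ∀ κ : ℝ, 0 < κ → κ ≤ κ₀ →
      ∃ cκ Cκ : ℝ, 0 < cκ ∧ cκ ≤ Cκ ∧
        ∀ x : EuclideanSpace ℝ (Fin d), x ≠ 0 → ∀ v : EuclideanSpace ℝ (Fin d),
          cκ * (U x + ‖v‖ ^ 2 / 2) ≤
              U x + ‖v‖ ^ 2 / 2 + κ * ⟪x, v⟫ - ⟪x, v⟫ / ‖x‖ ∧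
          U x + ‖v‖ ^ 2 / 2 + κ * ⟪x, v⟫ - ⟪x, v⟫ / ‖x‖ ≤
              Cκ * (U x + ‖v‖ ^ 2 / 2) := by
  refine ⟨1 / (4 * (2 * a₀ + 3)), by positivity, ?_⟩
  intro κ hκ hκ0
  refine ⟨1/8, 2, by norm_num, by norm_num, ?_⟩
  intro x hx v
  have hxpos : (0:ℝ) < ‖x‖ := norm_pos_iff.mpr hx
  have hUx := hU1 x
  have hv2 : (0:ℝ) ≤ ‖v‖ ^ 2 := sq_nonneg _
  -- ‖x‖² ≤ (2a₀+1) U x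
  have hx2 : ‖x‖ ^ 2 ≤ (2 * a₀ + 1) * U x := by
    rcases le_or_gt ‖x‖ 1 with h | h
    · nlinarith [norm_nonneg x]
    · have h1 : ‖x‖ ^ (2:ℝ) ≤ ‖x‖ ^ q₀ :=
        Real.rpow_le_rpow_of_exponent_le h.le hq₀
      have h2 : ‖x‖ ^ (2:ℝ) = ‖x‖ ^ 2 := Real.rpow_two _
      have h3 := hUlb x
      have h4 : ‖x‖ ^ q₀ ≤ a₀ * (U x + 1) := by
        have h5 : a₀⁻¹ * ‖x‖ ^ q₀ ≤ U x + 1 := by linarith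
        have h6 := mul_le_mul_of_nonneg_left h5 ha₀.le
        have h7 : a₀ * a₀⁻¹ = 1 := mul_inv_cancel₀ ha₀.ne'
        rw [← mul_assoc, h7, one_mul] at h6
        exact h6
      rw [h2] at h1
      nlinarith [mul_nonneg ha₀.le (by linarith : (0:ℝ) ≤ U x - 1)]
  -- key bound on the perturbation
  have hinner : |⟪x, v⟫| ≤ ‖x‖ * ‖v‖ := abs_real_inner_le_norm x v
  have hdiv : |⟪x, v⟫ / ‖x‖| ≤ ‖v‖ := by
    rw [abs_div, abs_of_pos hxpos, div_le_iff₀ hxpos]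
    nlinarith
  have hk3 : κ * (2 * a₀ + 3) ≤ 1 / 4 := by
    have h : κ ≤ 1 / (4 * (2 * a₀ + 3)) := hκ0
    rw [le_div_iff₀ (by positivity)] at h
    linarith
  have hP : |κ * ⟪x, v⟫ - ⟪x, v⟫ / ‖x‖| ≤ 7/8 * (U x + ‖v‖ ^ 2 / 2) := by
    have h1 : |κ * ⟪x, v⟫ - ⟪x, v⟫ / ‖x‖| ≤ κ * (‖x‖ * ‖v‖) + ‖v‖ := by
      calc |κ * ⟪x, v⟫ - ⟪x, v⟫ / ‖x‖| ≤ |κ * ⟪x, v⟫| + |⟪x, v⟫ / ‖x‖| :=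
            abs_sub _ _
        _ ≤ κ * (‖x‖ * ‖v‖) + ‖v‖ := by
            rw [abs_mul, abs_of_pos hκ]
            have := mul_le_mul_of_nonneg_left hinner hκ.le
            linarith
    have hamgm : ‖x‖ * ‖v‖ ≤ (‖x‖ ^ 2 + ‖v‖ ^ 2) / 2 := by
      nlinarith [sq_nonneg (‖x‖ - ‖v‖)]
    have h2 : κ * (‖x‖ * ‖v‖) ≤ κ * (((2 * a₀ + 1) * U x + ‖v‖ ^ 2) / 2) := by
      apply mul_le_mul_of_nonneg_left _ hκ.le
      linarith
    have h3 : κ * (((2 * a₀ + 1) * U x + ‖v‖ ^ 2) / 2)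
        ≤ 1/8 * (U x + ‖v‖ ^ 2 / 2) := by
      have hUE : U x ≤ U x + ‖v‖ ^ 2 / 2 := by linarith
      have hvE : ‖v‖ ^ 2 ≤ 2 * (U x + ‖v‖ ^ 2 / 2) := by linarith
      nlinarith [mul_le_mul_of_nonneg_left hUE hκ.le,
        mul_le_mul_of_nonneg_left hvE hκ.le, ha₀.le, hκ.le,
        mul_nonneg hκ.le (by linarith : (0:ℝ) ≤ ‖v‖ ^ 2 / 2)]
    have h4 : ‖v‖ ≤ 3/4 * (U x + ‖v‖ ^ 2 / 2) := by
      nlinarith [sq_nonneg (‖v‖ - 4/3)]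
    linarith
  have habs := abs_le.mp hP
  constructor <;> linarith [habs.1, habs.2]
end
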